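/- arXiv:1307.0206 — 5 statements merged into one kernel-verified Lean document; each statement's English description precedes it below -/
import Mathlib

section
/- Let β > 1 and let μ*, ν*, K* be nonnegative nonincreasing functions on (0,∞). If B := sup_{ω>0} ω^{−β} (∫_0^ω μ*(s)ds)(∫_0^ω ν*(t)dt)(∫_0^ω K*(s)ds) < ∞, then sup_{ω>0} ω^{1−β} ∫_0^ω μ*(s) ∫_0^ω ν*(t) K**(max(t,s)) dt ds ≤ C·B, where C depends only on β and K**(t) = (1/t)∫_0^t K*(s)ds. -/
/-!
Write `M, N, L` for the primitives of `μ*, ν*, K*` on `(0, x]`, so that `K**(x) = L(x) / x`.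
Splitting the inner integral at `t = s` and applying Tonelli to the part `t > s` turns the double
integral into `∫₀^ω μ*(s) N(s) K**(s) ds + ∫₀^ω M(t) ν*(t) K**(t) dt`. Monotonicity gives
`x μ*(x) ≤ M(x)` and `x ν*(x) ≤ N(x)`, so both integrands are at most `M N L / x² ≤ B x^(β-2)`,
whose integral over `(0, ω]` is `B ω^(β-1) / (β-1)`; hence `C = 2 / (β-1)`.

If `μ*` or `ν*` is not integrable near `0`, Lean's Bochner integrals take the junk value `0` and the
left-hand side vanishes, because the factor it multiplies is nonnegative and nonincreasing.
-/

open MeasureTheory Set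
open scoped ENNReal

/-- The paper's `K**`. -/
noncomputable def runningAverage (K : ℝ → ℝ) (m : ℝ) : ℝ := 1 / m * ∫ u in (0:ℝ)..m, K u

section IntegralsOnIoc

variable {f g : ℝ → ℝ} {a b c : ℝ}

lemma intervalIntegral_nonneg_of_pos (hf : ∀ t, 0 < t → 0 ≤ f t) (hb : 0 ≤ b) :
    0 ≤ ∫ t in (0:ℝ)..b, f t := by
  rw [intervalIntegral.integral_of_le hb]
  exact setIntegral_nonneg measurableSet_Ioc fun t ht => hf t ht.1

lemma setLIntegral_enorm_eq_enorm_integral (hab : a ≤ b)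
    (hf0 : ∀ t ∈ Ioc a b, 0 ≤ f t) (hfi : IntegrableOn f (Ioc a b)) :
    ∫⁻ t in Ioc a b, ‖f t‖ₑ = ‖∫ t in a..b, f t‖ₑ := by
  rw [intervalIntegral.integral_of_le hab, ← ofReal_integral_norm_eq_lintegral_enorm hfi,
    Real.enorm_eq_ofReal (setIntegral_nonneg measurableSet_Ioc hf0)]
  exact congrArg _
    (setIntegral_congr_fun measurableSet_Ioc fun t ht => Real.norm_of_nonneg (hf0 t ht))

lemma integrableOn_Ioc_of_antitoneOn (hf : AntitoneOn f (Ioc a b)) (hac : a < c)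
    (h : IntegrableOn f (Ioc a c)) : IntegrableOn f (Ioc a b) := by
  rcases le_total b c with hbc | hcb
  · exact h.mono_set (Ioc_subset_Ioc_right hbc)
  · rw [← Ioc_union_Ioc_eq_Ioc hac.le hcb]
    refine h.union ((AntitoneOn.integrableOn_isCompact isCompact_Icc ?_).mono_set
      Ioc_subset_Icc_self)
    exact hf.mono fun x hx => ⟨hac.trans_le hx.1, hx.2⟩

lemma sub_mul_le_integral_of_antitoneOn (hf : AntitoneOn f (Ioc a b)) (hab : a < b)
    (hfi : IntegrableOn f (Ioc a b)) : (b - a) * f b ≤ ∫ t in a..b, f t := by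
  calc (b - a) * f b = ∫ _ in a..b, f b := by simp
    _ ≤ ∫ t in a..b, f t :=
      intervalIntegral.integral_mono_on_of_le_Ioo hab.le intervalIntegrable_const
        ((intervalIntegrable_iff_integrableOn_Ioc_of_le hab.le).2 hfi)
        fun t ht => hf ⟨ht.1, ht.2.le⟩ ⟨hab, le_rfl⟩ ht.2.le

lemma setIntegral_mul_eq_zero_of_not_integrableOn (hf : AntitoneOn f (Ioc a b))
    (hf0 : ∀ x ∈ Ioc a b, 0 ≤ f x) (hfi : ¬ IntegrableOn f (Ioc a b))
    (hg : AntitoneOn g (Ioc a b)) (hg0 : ∀ x ∈ Ioc a b, 0 ≤ g x) :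
    ∫ x in Ioc a b, f x * g x = 0 := by
  by_cases hpos : ∃ c ∈ Ioc a b, 0 < g c
  · obtain ⟨c, hc, hgc⟩ := hpos
    refine integral_undef fun (hfg : IntegrableOn (fun x => f x * g x) (Ioc a b) volume) =>
      hfi (integrableOn_Ioc_of_antitoneOn hf hc.1 ?_)
    have hsub : Ioc a c ⊆ Ioc a b := Ioc_subset_Ioc_right hc.2
    refine ((hfg.mono_set hsub).div_const (g c)).mono'
      (aemeasurable_restrict_of_antitoneOn measurableSet_Ioc (hf.mono hsub)).aestronglyMeasurable
      (ae_restrict_of_forall_mem measurableSet_Ioc fun x hx => ?_)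
    rw [Real.norm_of_nonneg (hf0 x (hsub hx)), le_div_iff₀ hgc]
    exact mul_le_mul_of_nonneg_left (hg (hsub hx) hc hx.2) (hf0 x (hsub hx))
  · push Not at hpos
    exact setIntegral_eq_zero_of_forall_eq_zero fun x hx => by
      rw [le_antisymm (hpos x hx) (hg0 x hx), mul_zero]

end IntegralsOnIoc

section RunningAverage

variable {K : ℝ → ℝ} {m s : ℝ}

lemma runningAverage_nonneg (hK0 : ∀ t, 0 < t → 0 ≤ K t) (hm : 0 ≤ m) :
    0 ≤ runningAverage K m :=
  mul_nonneg (one_div_nonneg.2 hm) (intervalIntegral_nonneg_of_pos hK0 hm)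

lemma runningAverage_eq_integral_comp_mul (hm : 0 < m) :
    runningAverage K m = ∫ v in (0:ℝ)..1, K (m * v) := by
  rw [intervalIntegral.integral_comp_mul_left _ hm.ne', mul_zero, mul_one, smul_eq_mul,
    runningAverage, one_div]

lemma runningAverage_eq_zero (h : ¬ IntegrableOn K (Ioc 0 m)) (hm : 0 ≤ m) :
    runningAverage K m = 0 := by
  rw [runningAverage, intervalIntegral.integral_undef, mul_zero]
  rwa [intervalIntegrable_iff_integrableOn_Ioc_of_le hm]

lemma antitoneOn_runningAverage (hK : AntitoneOn K (Ioi 0)) :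
    AntitoneOn (runningAverage K) (Ioi 0) := by
  intro m hm m' hm' hmm'
  by_cases hi : IntegrableOn K (Ioc 0 m)
  · have hi' : IntegrableOn K (Ioc 0 m') :=
      integrableOn_Ioc_of_antitoneOn (hK.mono Ioc_subset_Ioi_self) hm hi
    have hcomp : ∀ x : ℝ, 0 < x → IntegrableOn K (Ioc 0 x) →
        IntervalIntegrable (fun v => K (x * v)) volume 0 1 := fun x hx hx' => by
      simpa [hx.ne'] using
        ((intervalIntegrable_iff_integrableOn_Ioc_of_le hx.le).2 hx').comp_mul_left (c := x)
    rw [runningAverage_eq_integral_comp_mul hm, runningAverage_eq_integral_comp_mul hm']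
    refine intervalIntegral.integral_mono_on_of_le_Ioo zero_le_one (hcomp m' hm' hi')
      (hcomp m hm hi) fun v hv => ?_
    exact hK (mul_pos hm hv.1) (mul_pos hm' hv.1) (mul_le_mul_of_nonneg_right hmm' hv.1.le)
  · have hi' : ¬ IntegrableOn K (Ioc 0 m') := fun h => hi (h.mono_set (Ioc_subset_Ioc_right hmm'))
    rw [runningAverage_eq_zero hi (le_of_lt hm), runningAverage_eq_zero hi' (le_of_lt hm')]

lemma antitone_runningAverage_max (hK : AntitoneOn K (Ioi 0)) (hs : 0 < s) :
    Antitone fun t => runningAverage K (max t s) := fun _ _ htt' =>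
  antitoneOn_runningAverage hK (lt_max_of_lt_right hs) (lt_max_of_lt_right hs)
    (max_le_max htt' le_rfl)

end RunningAverage

section Tonelli

variable {μ ν k φ : ℝ → ℝ≥0∞} {a b s : ℝ}

lemma setLIntegral_mul_max_eq (hν : AEMeasurable ν (volume.restrict (Ioc a b)))
    (hs : s ∈ Ioc a b) :
    ∫⁻ t in Ioc a b, ν t * k (max t s) =
      (∫⁻ t in Ioc a s, ν t) * k s + ∫⁻ t in Ioc s b, ν t * k t := by
  rw [← Ioc_union_Ioc_eq_Ioc hs.1.le hs.2,
    lintegral_union measurableSet_Ioc (Ioc_disjoint_Ioc_of_le le_rfl)]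
  congr 1
  · rw [← lintegral_mul_const'' _ (hν.mono_set (Ioc_subset_Ioc_right hs.2))]
    exact setLIntegral_congr_fun measurableSet_Ioc fun t ht => by rw [max_eq_right ht.2]
  · exact setLIntegral_congr_fun measurableSet_Ioc fun t ht => by rw [max_eq_left ht.1.le]

lemma setLIntegral_mul_setLIntegral_Ioc_swap (hμ : AEMeasurable μ (volume.restrict (Ioc a b)))
    (hφ : AEMeasurable φ (volume.restrict (Ioc a b))) :
    ∫⁻ s in Ioc a b, μ s * ∫⁻ t in Ioc s b, φ t =
      ∫⁻ t in Ioc a b, (∫⁻ s in Ioc a t, μ s) * φ t := by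
  -- both sides integrate `μ s * φ t` over the triangle `a < s < t ≤ b`
  let F : ℝ → ℝ → ℝ≥0∞ := fun s t =>
    {p : ℝ × ℝ | p.1 < p.2}.indicator (fun p => μ p.1 * φ p.2) (s, t)
  have hF : AEMeasurable (Function.uncurry F)
      ((volume.restrict (Ioc a b)).prod (volume.restrict (Ioc a b))) :=
    (hμ.comp_fst.mul hφ.comp_snd).indicator (measurableSet_lt measurable_fst measurable_snd)
  calc ∫⁻ s in Ioc a b, μ s * ∫⁻ t in Ioc s b, φ t
      = ∫⁻ s in Ioc a b, ∫⁻ t in Ioc a b, F s t := by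
        refine setLIntegral_congr_fun measurableSet_Ioc fun s hs => ?_
        have hF_s : (F s) = (Ioi s).indicator fun t => μ s * φ t := by
          ext t; simp [F, indicator_apply]
        rw [hF_s, lintegral_indicator measurableSet_Ioi,
          Measure.restrict_restrict measurableSet_Ioi, inter_comm, Ioc_inter_Ioi,
          sup_eq_right.2 hs.1.le,
          lintegral_const_mul'' _ (hφ.mono_set (Ioc_subset_Ioc_left hs.1.le))]
    _ = ∫⁻ t in Ioc a b, ∫⁻ s in Ioc a b, F s t := lintegral_lintegral_swap hF
    _ = ∫⁻ t in Ioc a b, (∫⁻ s in Ioc a t, μ s) * φ t := by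
        refine setLIntegral_congr_fun measurableSet_Ioc fun t ht => ?_
        have hF_t : (fun s => F s t) = (Iio t).indicator fun s => μ s * φ t := by
          ext s; simp [F, indicator_apply]
        have hIoo : Iio t ∩ Ioc a b = Ioo a t := by
          ext x; simp only [mem_inter_iff, mem_Iio, mem_Ioc, mem_Ioo]
          exact ⟨fun h => ⟨h.2.1, h.1⟩, fun h => ⟨h.2, h.1, h.2.le.trans ht.2⟩⟩
        rw [hF_t, lintegral_indicator measurableSet_Iio,
          Measure.restrict_restrict measurableSet_Iio, hIoo,
          Measure.restrict_congr_set Ioo_ae_eq_Ioc,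
          lintegral_mul_const'' _ (hμ.mono_set (Ioc_subset_Ioc_right ht.2))]

theorem setLIntegral_mul_setLIntegral_max_eq (hμ : AEMeasurable μ (volume.restrict (Ioc a b)))
    (hν : AEMeasurable ν (volume.restrict (Ioc a b)))
    (hk : AEMeasurable k (volume.restrict (Ioc a b))) :
    ∫⁻ s in Ioc a b, μ s * ∫⁻ t in Ioc a b, ν t * k (max t s) =
      (∫⁻ x in Ioc a b, μ x * (∫⁻ t in Ioc a x, ν t) * k x) +
        ∫⁻ x in Ioc a b, (∫⁻ s in Ioc a x, μ s) * ν x * k x := by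
  have hN : Monotone fun x => ∫⁻ t in Ioc a x, ν t := fun _ _ h =>
    lintegral_mono_set (Ioc_subset_Ioc_right h)
  calc ∫⁻ s in Ioc a b, μ s * ∫⁻ t in Ioc a b, ν t * k (max t s)
      = ∫⁻ s in Ioc a b, (μ s * (∫⁻ t in Ioc a s, ν t) * k s +
          μ s * ∫⁻ t in Ioc s b, ν t * k t) :=
        setLIntegral_congr_fun measurableSet_Ioc fun s hs => by
          rw [setLIntegral_mul_max_eq hν hs, mul_add, mul_assoc]
    _ = _ := by
        rw [lintegral_add_left' (f := fun x => μ x * (∫⁻ t in Ioc a x, ν t) * k x)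
            ((hμ.mul hN.measurable.aemeasurable).mul hk),
          setLIntegral_mul_setLIntegral_Ioc_swap (φ := fun t => ν t * k t) hμ (hν.mul hk)]
        simp only [mul_assoc]

end Tonelli

lemma setLIntegral_ofReal_mul_rpow {c r ω : ℝ} (hc : 0 ≤ c) (hr : -1 < r) (hω : 0 ≤ ω) :
    ∫⁻ x in Ioc 0 ω, ENNReal.ofReal (c * x ^ r) = ENNReal.ofReal (c * ω ^ (r + 1) / (r + 1)) := by
  have hi : IntegrableOn (fun x => c * x ^ r) (Ioc 0 ω) :=
    (intervalIntegrable_iff_integrableOn_Ioc_of_le hω).1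
      ((intervalIntegral.intervalIntegrable_rpow' hr).const_mul c)
  rw [← ofReal_integral_eq_lintegral_ofReal hi (ae_restrict_of_forall_mem measurableSet_Ioc
      fun x hx => mul_nonneg hc (Real.rpow_nonneg hx.1.le r)),
    ← intervalIntegral.integral_of_le hω, intervalIntegral.integral_const_mul,
    integral_rpow (Or.inl hr), Real.zero_rpow (by linarith), sub_zero, mul_div_assoc]

lemma mul_mul_div_le_mul_rpow {x a M N L B β : ℝ} (hx : 0 < x) (ha : x * a ≤ M) (hN : 0 ≤ N)
    (hL : 0 ≤ L) (h : M * N * L ≤ B * x ^ β) : a * N * (1 / x * L) ≤ B * x ^ (β - 2) := by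
  calc a * N * (1 / x * L) = x * a * N * L / x ^ 2 := by field_simp
    _ ≤ M * N * L / x ^ 2 := by gcongr
    _ ≤ B * x ^ β / x ^ 2 := by gcongr
    _ = B * x ^ (β - 2) := by rw [Real.rpow_sub hx, Real.rpow_two, mul_div_assoc]

section MainEstimate

variable {μ ν K : ℝ → ℝ} {β B ω x : ℝ}

lemma enorm_integral_mul_integral_le (f g : ℝ → ℝ) (h : ℝ → ℝ → ℝ) (hω : 0 ≤ ω) :
    ‖∫ s in (0:ℝ)..ω, f s * ∫ t in (0:ℝ)..ω, g t * h t s‖ₑ ≤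
      ∫⁻ s in Ioc 0 ω, ‖f s‖ₑ * ∫⁻ t in Ioc 0 ω, ‖g t‖ₑ * ‖h t s‖ₑ := by
  rw [intervalIntegral.integral_of_le hω]
  refine (enorm_integral_le_lintegral_enorm _).trans (lintegral_mono fun s => ?_)
  rw [enorm_mul, intervalIntegral.integral_of_le hω]
  gcongr
  exact (enorm_integral_le_lintegral_enorm _).trans_eq (by simp only [enorm_mul])

lemma enorm_mul_setLIntegral_mul_runningAverage_le (hμ : AntitoneOn μ (Ioi 0))
    (hμ0 : ∀ t, 0 < t → 0 ≤ μ t) (hν0 : ∀ t, 0 < t → 0 ≤ ν t) (hK0 : ∀ t, 0 < t → 0 ≤ K t)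
    (hx : 0 < x) (hμi : IntegrableOn μ (Ioc 0 x)) (hνi : IntegrableOn ν (Ioc 0 x))
    (hB : (∫ t in (0:ℝ)..x, μ t) * (∫ t in (0:ℝ)..x, ν t) * (∫ t in (0:ℝ)..x, K t) ≤ B * x ^ β) :
    ‖μ x‖ₑ * (∫⁻ t in Ioc 0 x, ‖ν t‖ₑ) * ‖runningAverage K x‖ₑ ≤
      ENNReal.ofReal (B * x ^ (β - 2)) := by
  have hμx : x * μ x ≤ ∫ t in (0:ℝ)..x, μ t := by
    simpa using sub_mul_le_integral_of_antitoneOn (hμ.mono Ioc_subset_Ioi_self) hx hμi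
  have hN := intervalIntegral_nonneg_of_pos hν0 hx.le
  have hKx := runningAverage_nonneg hK0 hx.le
  have hμx0 := hμ0 x hx
  rw [setLIntegral_enorm_eq_enorm_integral hx.le (fun t ht => hν0 t ht.1) hνi, ← enorm_mul,
    ← enorm_mul, Real.enorm_eq_ofReal (by positivity)]
  exact ENNReal.ofReal_le_ofReal
    (mul_mul_div_le_mul_rpow hx hμx hN (intervalIntegral_nonneg_of_pos hK0 hx.le) hB)

theorem integral_mul_integral_runningAverage_le_of_integrableOn (hβ : 1 < β)
    (hμ : AntitoneOn μ (Ioi 0)) (hν : AntitoneOn ν (Ioi 0)) (hK : AntitoneOn K (Ioi 0))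
    (hμ0 : ∀ t, 0 < t → 0 ≤ μ t) (hν0 : ∀ t, 0 < t → 0 ≤ ν t) (hK0 : ∀ t, 0 < t → 0 ≤ K t)
    (hω : 0 ≤ ω) (hμi : IntegrableOn μ (Ioc 0 ω)) (hνi : IntegrableOn ν (Ioc 0 ω)) (hB0 : 0 ≤ B)
    (hB : ∀ x ∈ Ioc 0 ω,
      (∫ t in (0:ℝ)..x, μ t) * (∫ t in (0:ℝ)..x, ν t) * (∫ t in (0:ℝ)..x, K t) ≤ B * x ^ β) :
    ∫ s in (0:ℝ)..ω, μ s * ∫ t in (0:ℝ)..ω, ν t * runningAverage K (max t s) ≤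
      2 * (B * ω ^ (β - 1) / (β - 1)) := by
  set R := B * ω ^ (β - 1) / (β - 1)
  have hR : 0 ≤ R := div_nonneg (mul_nonneg hB0 (Real.rpow_nonneg hω _)) (sub_nonneg.2 hβ.le)
  have hmeas : ∀ {f : ℝ → ℝ}, AntitoneOn f (Ioi 0) →
      AEMeasurable (fun x => ‖f x‖ₑ) (volume.restrict (Ioc 0 ω)) := fun hf =>
    (aemeasurable_restrict_of_antitoneOn measurableSet_Ioc (hf.mono Ioc_subset_Ioi_self)).enorm
  have hR_eq : ∫⁻ x in Ioc 0 ω, ENNReal.ofReal (B * x ^ (β - 2)) = ENNReal.ofReal R := by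
    rw [setLIntegral_ofReal_mul_rpow hB0 (by linarith) hω, show β - 2 + 1 = β - 1 by ring]
  have key := calc
    ‖∫ s in (0:ℝ)..ω, μ s * ∫ t in (0:ℝ)..ω, ν t * runningAverage K (max t s)‖ₑ
      ≤ ∫⁻ s in Ioc 0 ω, ‖μ s‖ₑ * ∫⁻ t in Ioc 0 ω, ‖ν t‖ₑ * ‖runningAverage K (max t s)‖ₑ :=
        enorm_integral_mul_integral_le _ _ _ hω
    _ = (∫⁻ x in Ioc 0 ω, ‖μ x‖ₑ * (∫⁻ t in Ioc 0 x, ‖ν t‖ₑ) * ‖runningAverage K x‖ₑ) +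
          ∫⁻ x in Ioc 0 ω, (∫⁻ s in Ioc 0 x, ‖μ s‖ₑ) * ‖ν x‖ₑ * ‖runningAverage K x‖ₑ :=
        setLIntegral_mul_setLIntegral_max_eq (hmeas hμ) (hmeas hν)
          (hmeas (antitoneOn_runningAverage hK))
    _ ≤ ENNReal.ofReal R + ENNReal.ofReal R := by
        rw [← hR_eq]
        refine add_le_add (setLIntegral_mono' measurableSet_Ioc fun x hx => ?_)
          (setLIntegral_mono' measurableSet_Ioc fun x hx => ?_)
        · exact enorm_mul_setLIntegral_mul_runningAverage_le hμ hμ0 hν0 hK0 hx.1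
            (hμi.mono_set (Ioc_subset_Ioc_right hx.2)) (hνi.mono_set (Ioc_subset_Ioc_right hx.2))
            (hB x hx)
        · rw [mul_comm (∫⁻ s in Ioc 0 x, ‖μ s‖ₑ)]
          refine enorm_mul_setLIntegral_mul_runningAverage_le hν hν0 hμ0 hK0 hx.1
            (hνi.mono_set (Ioc_subset_Ioc_right hx.2)) (hμi.mono_set (Ioc_subset_Ioc_right hx.2)) ?_
          rw [mul_comm (∫ t in (0:ℝ)..x, ν t)]
          exact hB x hx
  rw [← ENNReal.ofReal_add hR hR, ← ofReal_norm, ENNReal.ofReal_le_ofReal_iff (by positivity)]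
    at key
  linarith [Real.le_norm_self
    (∫ s in (0:ℝ)..ω, μ s * ∫ t in (0:ℝ)..ω, ν t * runningAverage K (max t s))]

lemma antitoneOn_integral_mul_runningAverage_max (hK : AntitoneOn K (Ioi 0))
    (hK0 : ∀ t, 0 < t → 0 ≤ K t) (hν0 : ∀ t, 0 < t → 0 ≤ ν t) (hνi : IntegrableOn ν (Ioc 0 ω)) :
    AntitoneOn (fun s => ∫ t in Ioc 0 ω, ν t * runningAverage K (max t s)) (Ioi 0) := by
  refine integral_antitoneOn_of_integrand_ae
    (ae_restrict_of_forall_mem measurableSet_Ioc fun t ht s _ s' _ hss' => ?_) fun s hs => ?_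
  · refine mul_le_mul_of_nonneg_left ?_ (hν0 t ht.1)
    simpa only [max_comm t] using antitone_runningAverage_max hK ht.1 hss'
  · refine hνi.mul_bdd (c := runningAverage K s)
      (antitone_runningAverage_max hK hs).measurable.aestronglyMeasurable (ae_of_all _ fun t => ?_)
    rw [Real.norm_of_nonneg (runningAverage_nonneg hK0 (le_max_of_le_right (le_of_lt hs)))]
    exact antitoneOn_runningAverage hK hs (mem_Ioi.2 (lt_max_of_lt_right hs)) (le_max_right t s)

theorem integral_mul_integral_runningAverage_eq_zero
    (hμ : AntitoneOn μ (Ioi 0)) (hν : AntitoneOn ν (Ioi 0)) (hK : AntitoneOn K (Ioi 0))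
    (hμ0 : ∀ t, 0 < t → 0 ≤ μ t) (hν0 : ∀ t, 0 < t → 0 ≤ ν t) (hK0 : ∀ t, 0 < t → 0 ≤ K t)
    (hω : 0 ≤ ω) (hi : ¬ (IntegrableOn μ (Ioc 0 ω) ∧ IntegrableOn ν (Ioc 0 ω))) :
    ∫ s in (0:ℝ)..ω, μ s * ∫ t in (0:ℝ)..ω, ν t * runningAverage K (max t s) = 0 := by
  simp only [intervalIntegral.integral_of_le hω]
  have hg0 : ∀ s t, t ∈ Ioc 0 ω → 0 ≤ runningAverage K (max t s) := fun s t ht =>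
    runningAverage_nonneg hK0 (le_max_of_le_left ht.1.le)
  by_cases hνi : IntegrableOn ν (Ioc 0 ω)
  · exact setIntegral_mul_eq_zero_of_not_integrableOn (hμ.mono Ioc_subset_Ioi_self)
      (fun s hs => hμ0 s hs.1) (fun hμi => hi ⟨hμi, hνi⟩)
      ((antitoneOn_integral_mul_runningAverage_max hK hK0 hν0 hνi).mono Ioc_subset_Ioi_self)
      fun s _ => setIntegral_nonneg measurableSet_Ioc fun t ht =>
        mul_nonneg (hν0 t ht.1) (hg0 s t ht)
  · refine setIntegral_eq_zero_of_forall_eq_zero fun s hs => ?_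
    rw [setIntegral_mul_eq_zero_of_not_integrableOn (hν.mono Ioc_subset_Ioi_self)
      (fun t ht => hν0 t ht.1) hνi ((antitone_runningAverage_max hK hs.1).antitoneOn _) (hg0 s),
      mul_zero]

theorem integral_mul_integral_runningAverage_le (hβ : 1 < β)
    (hμ : AntitoneOn μ (Ioi 0)) (hν : AntitoneOn ν (Ioi 0)) (hK : AntitoneOn K (Ioi 0))
    (hμ0 : ∀ t, 0 < t → 0 ≤ μ t) (hν0 : ∀ t, 0 < t → 0 ≤ ν t) (hK0 : ∀ t, 0 < t → 0 ≤ K t)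
    (hω : 0 ≤ ω) (hB0 : 0 ≤ B)
    (hB : ∀ x ∈ Ioc 0 ω,
      (∫ t in (0:ℝ)..x, μ t) * (∫ t in (0:ℝ)..x, ν t) * (∫ t in (0:ℝ)..x, K t) ≤ B * x ^ β) :
    ∫ s in (0:ℝ)..ω, μ s * ∫ t in (0:ℝ)..ω, ν t * runningAverage K (max t s) ≤
      2 * (B * ω ^ (β - 1) / (β - 1)) := by
  by_cases hi : IntegrableOn μ (Ioc 0 ω) ∧ IntegrableOn ν (Ioc 0 ω)
  · exact integral_mul_integral_runningAverage_le_of_integrableOn hβ hμ hν hK hμ0 hν0 hK0 hω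
      hi.1 hi.2 hB0 hB
  · rw [integral_mul_integral_runningAverage_eq_zero hμ hν hK hμ0 hν0 hK0 hω hi]
    have := sub_pos.2 hβ
    positivity

end MainEstimate

theorem stmt1 (β : ℝ) (hβ : 1 < β) :
    ∃ C : ℝ, 0 < C ∧ ∀ μs νs Ks : ℝ → ℝ,
      AntitoneOn μs (Set.Ioi 0) → AntitoneOn νs (Set.Ioi 0) → AntitoneOn Ks (Set.Ioi 0) →
      (∀ t, 0 < t → 0 ≤ μs t) → (∀ t, 0 < t → 0 ≤ νs t) → (∀ t, 0 < t → 0 ≤ Ks t) →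
      ∀ B : ℝ,
        (∀ ω, 0 < ω → ω ^ (-β) *
            ((∫ s in (0:ℝ)..ω, μs s) * (∫ t in (0:ℝ)..ω, νs t) * (∫ s in (0:ℝ)..ω, Ks s))
            ≤ B) →
        ∀ ω, 0 < ω →
          ω ^ (1 - β) *
            (∫ s in (0:ℝ)..ω, μs s * ∫ t in (0:ℝ)..ω, νs t *
              ((1 / max t s) * ∫ u in (0:ℝ)..(max t s), Ks u)) ≤ C * B := by
  refine ⟨2 / (β - 1), div_pos two_pos (sub_pos.2 hβ),
    fun μs νs Ks hμ hν hK hμ0 hν0 hK0 B hB ω hω => ?_⟩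
  have hB0 : 0 ≤ B := (hB 1 one_pos).trans' <| mul_nonneg (Real.rpow_nonneg zero_le_one _) <|
    mul_nonneg (mul_nonneg (intervalIntegral_nonneg_of_pos hμ0 zero_le_one)
      (intervalIntegral_nonneg_of_pos hν0 zero_le_one))
      (intervalIntegral_nonneg_of_pos hK0 zero_le_one)
  have hB' : ∀ x ∈ Ioc 0 ω, (∫ t in (0:ℝ)..x, μs t) * (∫ t in (0:ℝ)..x, νs t) *
      (∫ t in (0:ℝ)..x, Ks t) ≤ B * x ^ β := fun x hx => by
    rw [mul_comm B, ← inv_mul_le_iff₀ (Real.rpow_pos_of_pos hx.1 β), ← Real.rpow_neg hx.1.le]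
    exact hB x hx.1
  calc ω ^ (1 - β) * (∫ s in (0:ℝ)..ω, μs s * ∫ t in (0:ℝ)..ω, νs t * runningAverage Ks (max t s))
      ≤ ω ^ (1 - β) * (2 * (B * ω ^ (β - 1) / (β - 1))) := by
        gcongr
        exact integral_mul_integral_runningAverage_le hβ hμ hν hK hμ0 hν0 hK0 hω.le hB0 hB'
    _ = ω ^ (1 - β) * ω ^ (β - 1) * (2 / (β - 1) * B) := by ring
    _ = 2 / (β - 1) * B := by rw [← Real.rpow_add hω]; norm_num
end

section
/- Let 1 < p, q < ∞ and let μ*, ν*, K* be nonincreasing nonnegative functions on (0,∞) satisfying μ*(λt) ≲ λ^{−α}μ*(t), ν*(λt) ≲ λ^{−β}ν*(t), K*(λt) ≲ λ^{−ρ}K*(t) for all λ ≥ 1, t > 0, with α, β, ρ ≥ 0, ρ + α + 1/p ≥ 1, and ρ + β + 1/q' ≥ 1 (1/q' = 1 − 1/q). If D := sup_{t>0} t^{−(2+1/p−1/q)} (∫_0^t μ*)(∫_0^t ν*)(∫_0^t K*) < ∞, then sup_{ξ,η>0} η^{−1/q'} ξ^{−1/p} ∫_0^η ν*(t) ∫_0^ξ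 μ*(s) K**(max(s,t)) ds dt ≤ C·D with C depending only on p, q, α, β, ρ. -/
/-!
Splitting the inner integral at `s = t` and exchanging the order of integration on `{t < s}`
bounds the double integral by `∫₀^η ν K** M(min ξ t) dt + ∫₀^ξ μ K** N(min η s) ds`, where `M`,
`N`, `L` are the primitives of `μ`, `ν`, `K`; the two terms are exchanged by
`(μ, ξ, 1/p) ↔ (ν, η, 1/q')`. In the first, below the cut `t ≤ ξ` the integrand is at most
`D t^(1/p - 1/q)`, because `t ν(t) ≤ N(t)` and `t K**(t) = L(t)` reduce it to the hypothesis on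
`M N L`; beyond the cut, the decay of `ν K**` with exponent `β + ρ ≥ 1/q` carries the bound at
`t = ξ` over. Either way the integrand is `≲ D ξ^(1/p) t^(-1/q)`, whose integral over `(0, η]` is
`q' D ξ^(1/p) η^(1/q')`. `K**` decays like `K` because `K** x = ∫₀¹ K (x v) dv`: averaging
commutes with dilations.

If `μ`, `ν` or `K` is not integrable near `0`, the Bochner integral on the left is `0`.
-/

open MeasureTheory Set

/-- The paper's `K**`. -/
noncomputable def hardyAverage (K : ℝ → ℝ) (x : ℝ) : ℝ := (1 / x) * ∫ u in (0:ℝ)..x, K u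

noncomputable def maxKernelIntegral (μ ν K : ℝ → ℝ) (ξ η : ℝ) : ℝ :=
  ∫ t in (0:ℝ)..η, ν t * ∫ s in (0:ℝ)..ξ, μ s * hardyAverage K (max s t)

def PowerDecay (f : ℝ → ℝ) (c r : ℝ) : Prop :=
  ∀ l t : ℝ, 1 ≤ l → 0 < t → f (l * t) ≤ c * l ^ (-r) * f t

namespace PowerDecay

variable {f g : ℝ → ℝ} {c d r s : ℝ}

theorem le_of_le (hf : PowerDecay f c r) {x y : ℝ} (hx : 0 < x) (hxy : x ≤ y) :
    f y ≤ c * (y / x) ^ (-r) * f x := by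
  simpa [div_mul_cancel₀ y hx.ne'] using hf (y / x) x ((one_le_div hx).mpr hxy) hx

theorem mono_exponent (hf : PowerDecay f c r) (hc : 0 ≤ c) (hf0 : ∀ t, 0 < t → 0 ≤ f t)
    {r' : ℝ} (hr : r' ≤ r) : PowerDecay f c r' := fun l t hl ht =>
  (hf l t hl ht).trans <| by
    gcongr
    exact hf0 t ht

theorem mul (hf : PowerDecay f c r) (hg : PowerDecay g d s) (hc : 0 ≤ c)
    (hf0 : ∀ t, 0 < t → 0 ≤ f t) (hg0 : ∀ t, 0 < t → 0 ≤ g t) :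
    PowerDecay (f * g) (c * d) (r + s) := fun l t hl ht => by
  have hl0 : 0 < l := by linarith
  calc f (l * t) * g (l * t) ≤ (c * l ^ (-r) * f t) * (d * l ^ (-s) * g t) :=
        mul_le_mul (hf l t hl ht) (hg l t hl ht) (hg0 _ (by positivity))
          (mul_nonneg (mul_nonneg hc (by positivity)) (hf0 t ht))
    _ = c * d * l ^ (-(r + s)) * (f t * g t) := by
        rw [neg_add, Real.rpow_add hl0]; ring

end PowerDecay

theorem powerDecay_one_zero_iff {f : ℝ → ℝ} : PowerDecay f 1 0 ↔ AntitoneOn f (Ioi 0) := by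
  refine ⟨fun hf x hx y _ hxy => by simpa using hf.le_of_le hx hxy, fun hf l t hl ht => ?_⟩
  simpa using hf ht (mem_Ioi.2 (by nlinarith)) (le_mul_of_one_le_left ht.le hl)

theorem ofReal_integral_le_lintegral_ofReal {α : Type*} [MeasurableSpace α] {m : Measure α}
    (f : α → ℝ) : ENNReal.ofReal (∫ x, f x ∂m) ≤ ∫⁻ x, ENNReal.ofReal (f x) ∂m := by
  by_cases hf : Integrable f m
  · rw [integral_eq_lintegral_pos_part_sub_lintegral_neg_part hf]
    exact (ENNReal.ofReal_le_ofReal (sub_le_self _ ENNReal.toReal_nonneg)).trans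
      ENNReal.ofReal_toReal_le
  · simp [integral_undef hf]

theorem lintegral_mul_setLIntegral_Ioi {m m' : Measure ℝ} [SFinite m] [SFinite m']
    {f g : ℝ → ENNReal} (hf : AEMeasurable f m) (hg : AEMeasurable g m') :
    ∫⁻ t, f t * ∫⁻ s in Ioi t, g s ∂m' ∂m = ∫⁻ s, g s * ∫⁻ t in Iio s, f t ∂m ∂m' := by
  have hF : AEMeasurable (Function.uncurry fun t s => f t * (Ioi t).indicator g s) (m.prod m') := by
    have h := (hf.comp_fst.mul hg.comp_snd).indicator
      (measurableSet_lt measurable_fst measurable_snd)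
    refine h.congr (.of_forall fun p => ?_)
    by_cases hp : p.1 < p.2 <;> simp [indicator, hp, Function.uncurry]
  calc ∫⁻ t, f t * ∫⁻ s in Ioi t, g s ∂m' ∂m
      = ∫⁻ t, ∫⁻ s, f t * (Ioi t).indicator g s ∂m' ∂m := by
        congr 1; ext t
        rw [lintegral_const_mul'' _ (hg.indicator measurableSet_Ioi),
          lintegral_indicator measurableSet_Ioi]
    _ = ∫⁻ s, ∫⁻ t, f t * (Ioi t).indicator g s ∂m ∂m' := lintegral_lintegral_swap hF
    _ = ∫⁻ s, g s * ∫⁻ t in Iio s, f t ∂m ∂m' := by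
        congr 1; ext s
        rw [← lintegral_indicator measurableSet_Iio,
          ← lintegral_const_mul'' _ (hf.indicator measurableSet_Iio)]
        congr 1; ext t
        by_cases h : t < s <;> simp [indicator, h, mul_comm]

theorem lintegral_Ioc_ofReal_rpow {b y : ℝ} (hb : 0 < b) (hy : 0 ≤ y) :
    ∫⁻ t in Ioc 0 y, ENNReal.ofReal (t ^ (b - 1)) = ENNReal.ofReal (y ^ b / b) := by
  have hi : IntervalIntegrable (fun t : ℝ => t ^ (b - 1)) volume 0 y :=
    intervalIntegral.intervalIntegrable_rpow' (by linarith)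
  rw [← ofReal_integral_eq_lintegral_ofReal
      ((intervalIntegrable_iff_integrableOn_Ioc_of_le hy).1 hi)
      ((ae_restrict_iff' measurableSet_Ioc).2 (.of_forall fun t ht => Real.rpow_nonneg ht.1.le _)),
    ← intervalIntegral.integral_of_le hy, integral_rpow (Or.inl (by linarith))]
  simp [Real.zero_rpow hb.ne']

section Primitive

variable {f : ℝ → ℝ}

theorem AntitoneOn.integrableOn_Ioc (hf : AntitoneOn f (Ioi 0)) {x : ℝ} (hx : 0 < x)
    (h : IntegrableOn f (Ioc 0 x)) (y : ℝ) : IntegrableOn f (Ioc 0 y) := by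
  rcases le_total y x with hyx | hxy
  · exact h.mono_set (Ioc_subset_Ioc_right hyx)
  · rw [← Ioc_union_Ioc_eq_Ioc hx.le hxy]
    exact h.union (((hf.mono fun z hz => hx.trans_le hz.1).integrableOn_isCompact
      isCompact_Icc).mono_set Ioc_subset_Icc_self)

theorem primitive_nonneg (hf0 : ∀ t, 0 < t → 0 ≤ f t) {x : ℝ} (hx : 0 ≤ x) :
    0 ≤ ∫ u in (0:ℝ)..x, f u := by
  rw [intervalIntegral.integral_of_le hx]
  exact setIntegral_nonneg measurableSet_Ioc fun u hu => hf0 u hu.1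

theorem primitive_mono (hf0 : ∀ t, 0 < t → 0 ≤ f t)
    (hfi : ∀ x, IntegrableOn f (Ioc 0 x)) {x y : ℝ} (hx : 0 ≤ x) (hxy : x ≤ y) :
    ∫ u in (0:ℝ)..x, f u ≤ ∫ u in (0:ℝ)..y, f u :=
  intervalIntegral.integral_mono_interval le_rfl hx hxy
    ((ae_restrict_iff' measurableSet_Ioc).2 (.of_forall fun u hu => hf0 u hu.1))
    ((intervalIntegrable_iff_integrableOn_Ioc_of_le (hx.trans hxy)).2 (hfi y))

theorem AntitoneOn.mul_le_primitive (hf : AntitoneOn f (Ioi 0)) {x : ℝ} (hx : 0 < x)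
    (hfi : IntegrableOn f (Ioc 0 x)) : x * f x ≤ ∫ u in (0:ℝ)..x, f u := by
  have h := intervalIntegral.integral_mono_on_of_le_Ioo hx.le intervalIntegrable_const
    ((intervalIntegrable_iff_integrableOn_Ioc_of_le hx.le).2 hfi)
    fun u hu => hf hu.1 (mem_Ioi.2 hx) hu.2.le
  simpa using h

end Primitive

section HardyAverage

variable {K : ℝ → ℝ}

theorem hardyAverage_eq_integral_comp_mul (K : ℝ → ℝ) {x : ℝ} (hx : x ≠ 0) :
    hardyAverage K x = ∫ v in (0:ℝ)..1, K (x * v) := by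
  simp [hardyAverage, intervalIntegral.integral_comp_mul_left _ hx]

theorem hardyAverage_nonneg (hK0 : ∀ t, 0 < t → 0 ≤ K t) {x : ℝ} (hx : 0 ≤ x) :
    0 ≤ hardyAverage K x :=
  mul_nonneg (by positivity) (primitive_nonneg hK0 hx)

theorem hardyAverage_eq_zero_of_not_integrableOn (hK : AntitoneOn K (Ioi 0))
    (hKi : ¬ ∀ y, IntegrableOn K (Ioc 0 y)) {x : ℝ} (hx : 0 ≤ x) : hardyAverage K x = 0 := by
  rcases hx.eq_or_lt with rfl | hx
  · simp [hardyAverage]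
  rw [hardyAverage, intervalIntegral.integral_undef fun h => hKi (hK.integrableOn_Ioc hx
    ((intervalIntegrable_iff_integrableOn_Ioc_of_le hx.le).1 h)), mul_zero]

theorem PowerDecay.hardyAverage {c r : ℝ} (hK : PowerDecay K c r) (hc : 0 ≤ c)
    (hK0 : ∀ t, 0 < t → 0 ≤ K t) : PowerDecay (hardyAverage K) c r := by
  intro l t hl ht
  have hlt : 0 < l * t := by nlinarith
  by_cases hi : IntegrableOn K (Ioc 0 (l * t))
  · rw [hardyAverage_eq_integral_comp_mul K hlt.ne', hardyAverage_eq_integral_comp_mul K ht.ne',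
      ← intervalIntegral.integral_const_mul]
    have hi' : IntervalIntegrable K volume 0 (l * t) :=
      (intervalIntegrable_iff_integrableOn_Ioc_of_le hlt.le).2 hi
    have hit : IntervalIntegrable K volume 0 t :=
      (intervalIntegrable_iff_integrableOn_Ioc_of_le ht.le).2
        (hi.mono_set (Ioc_subset_Ioc_right (le_mul_of_one_le_left ht.le hl)))
    refine intervalIntegral.integral_mono_on_of_le_Ioo zero_le_one ?_ ?_ fun v hv => ?_
    · simpa [hlt.ne'] using hi'.comp_mul_left (c := l * t)
    · simpa [ht.ne'] using (hit.comp_mul_left (c := t)).const_mul (c * l ^ (-r))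
    · simpa [mul_assoc] using hK l (t * v) hl (mul_pos ht hv.1)
  · rw [_root_.hardyAverage, intervalIntegral.integral_undef, mul_zero]
    · exact mul_nonneg (mul_nonneg hc (by positivity)) (hardyAverage_nonneg hK0 ht.le)
    · rwa [intervalIntegrable_iff_integrableOn_Ioc_of_le hlt.le]

theorem AntitoneOn.hardyAverage (hK : AntitoneOn K (Ioi 0)) (hK0 : ∀ t, 0 < t → 0 ≤ K t) :
    AntitoneOn (hardyAverage K) (Ioi 0) :=
  powerDecay_one_zero_iff.1 ((powerDecay_one_zero_iff.2 hK).hardyAverage zero_le_one hK0)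

end HardyAverage

section Degenerate

variable {μ ν K : ℝ → ℝ} {ξ η : ℝ}

theorem mul_hardyAverage_le_mul_hardyAverage (hK0 : ∀ t, 0 < t → 0 ≤ K t)
    (hKi : ∀ y, IntegrableOn K (Ioc 0 y)) {x y : ℝ} (hx : 0 < x) (hxy : x ≤ y) :
    x * hardyAverage K x ≤ y * hardyAverage K y := by
  simp only [hardyAverage, ← mul_assoc, mul_one_div_cancel hx.ne',
    mul_one_div_cancel (hx.trans_le hxy).ne', one_mul]
  exact primitive_mono hK0 hKi hx.le hxy

theorem intervalIntegrable_mul_comp_max {k : ℝ → ℝ} (hμ : AntitoneOn μ (Ioi 0))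
    (hμ0 : ∀ s, 0 < s → 0 ≤ μ s) (hμi : IntegrableOn μ (Ioc 0 ξ)) (hk : AntitoneOn k (Ioi 0))
    (hk0 : ∀ s, 0 < s → 0 ≤ k s) (hξ : 0 ≤ ξ) {t : ℝ} (ht : 0 < t) :
    IntervalIntegrable (fun s => μ s * k (max s t)) volume 0 ξ := by
  rw [intervalIntegrable_iff_integrableOn_Ioc_of_le hξ]
  have hkmax : AntitoneOn (fun s => k (max s t)) (Ioc 0 ξ) := fun a _ b _ hab =>
    hk (lt_max_of_lt_right ht) (lt_max_of_lt_right ht) (max_le_max_right t hab)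
  refine (hμi.mul_const (k t)).mono' ((aemeasurable_restrict_of_antitoneOn measurableSet_Ioc
    (hμ.mono Ioc_subset_Ioi_self)).mul (aemeasurable_restrict_of_antitoneOn measurableSet_Ioc
    hkmax)).aestronglyMeasurable ((ae_restrict_iff' measurableSet_Ioc).2 (.of_forall ?_))
  intro s hs
  rw [Real.norm_of_nonneg (mul_nonneg (hμ0 s hs.1) (hk0 _ (lt_max_of_lt_right ht)))]
  exact mul_le_mul_of_nonneg_left (hk ht (lt_max_of_lt_right ht) (le_max_right s t)) (hμ0 s hs.1)

theorem maxKernelIntegral_eq_zero (hη : 0 ≤ η)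
    (h : ∀ t ∈ Ioc 0 η, ∫ s in (0:ℝ)..ξ, μ s * hardyAverage K (max s t) = 0) :
    maxKernelIntegral μ ν K ξ η = 0 := by
  rw [maxKernelIntegral, intervalIntegral.integral_of_le hη]
  exact setIntegral_eq_zero_of_forall_eq_zero fun t ht => by rw [h t ht, mul_zero]

theorem maxKernelIntegral_eq_zero_of_not_integrableOn_kernel (hK : AntitoneOn K (Ioi 0))
    (hKi : ¬ ∀ y, IntegrableOn K (Ioc 0 y)) (hξ : 0 ≤ ξ) (hη : 0 ≤ η) :
    maxKernelIntegral μ ν K ξ η = 0 := by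
  refine maxKernelIntegral_eq_zero hη fun t ht => ?_
  rw [intervalIntegral.integral_of_le hξ]
  refine setIntegral_eq_zero_of_forall_eq_zero fun s hs => ?_
  rw [hardyAverage_eq_zero_of_not_integrableOn hK hKi (le_max_of_le_left hs.1.le), mul_zero]

theorem maxKernelIntegral_eq_zero_of_not_integrableOn_left (hμ : AntitoneOn μ (Ioi 0))
    (hμi : ¬ ∀ y, IntegrableOn μ (Ioc 0 y)) (hK : AntitoneOn K (Ioi 0))
    (hK0 : ∀ t, 0 < t → 0 ≤ K t) (hξ : 0 < ξ) (hη : 0 ≤ η) :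
    maxKernelIntegral μ ν K ξ η = 0 := by
  refine maxKernelIntegral_eq_zero hη fun t ht => ?_
  by_cases h0 : hardyAverage K t = 0
  · rw [intervalIntegral.integral_of_le hξ.le]
    refine setIntegral_eq_zero_of_forall_eq_zero fun s _ => ?_
    have hmax : hardyAverage K (max s t) = 0 := le_antisymm
      (h0 ▸ hK.hardyAverage hK0 ht.1 (lt_max_of_lt_right ht.1) (le_max_right s t))
      (hardyAverage_nonneg hK0 (le_max_of_le_right ht.1.le))
    rw [hmax, mul_zero]
  -- on `(0, min ξ t]` the integrand is `μ s * K** t` with `K** t ≠ 0`, so `μ` would be integrable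
  refine intervalIntegral.integral_undef fun h => hμi ?_
  have hm : 0 < min ξ t := lt_min hξ ht.1
  refine hμ.integrableOn_Ioc hm ?_
  have h1 : IntegrableOn (fun s => μ s * hardyAverage K (max s t) * (hardyAverage K t)⁻¹)
      (Ioc 0 (min ξ t)) := (((intervalIntegrable_iff_integrableOn_Ioc_of_le hξ.le).1 h).mono_set
    (Ioc_subset_Ioc_right (min_le_left ξ t))).mul_const _
  refine h1.congr_fun (fun s hs => ?_) measurableSet_Ioc
  dsimp only
  rw [max_eq_right (hs.2.trans (min_le_right ξ t))]
  field_simp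

theorem integral_mul_comp_max_mem_Icc {k : ℝ → ℝ} (hμ : AntitoneOn μ (Ioi 0))
    (hμ0 : ∀ s, 0 < s → 0 ≤ μ s) (hμi : IntegrableOn μ (Ioc 0 ξ)) (hk : AntitoneOn k (Ioi 0))
    (hk0 : ∀ s, 0 < s → 0 ≤ k s) (hξ : 0 ≤ ξ) {t T : ℝ} (ht : 0 < t) (htT : t ≤ T)
    (hξT : ξ ≤ T) :
    ∫ s in (0:ℝ)..ξ, μ s * k (max s t) ∈
      Icc (k T * ∫ s in (0:ℝ)..ξ, μ s) (k t * ∫ s in (0:ℝ)..ξ, μ s) := by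
  have hint := intervalIntegrable_mul_comp_max hμ hμ0 hμi hk hk0 hξ ht
  have hμξ : IntervalIntegrable μ volume 0 ξ :=
    (intervalIntegrable_iff_integrableOn_Ioc_of_le hξ).2 hμi
  rw [mul_comm (k T), mul_comm (k t), ← intervalIntegral.integral_mul_const,
    ← intervalIntegral.integral_mul_const]
  constructor
  · refine intervalIntegral.integral_mono_on_of_le_Ioo hξ (hμξ.mul_const _) hint
      fun s hs => mul_le_mul_of_nonneg_left ?_ (hμ0 s hs.1)
    exact hk (lt_max_of_lt_right ht) (ht.trans_le htT) (max_le (hs.2.le.trans hξT) htT)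
  · refine intervalIntegral.integral_mono_on_of_le_Ioo hξ hint (hμξ.mul_const _)
      fun s hs => mul_le_mul_of_nonneg_left ?_ (hμ0 s hs.1)
    exact hk ht (lt_max_of_lt_right ht) (le_max_right s t)

/-- If `K** (max ξ η) * M ξ` is positive, it bounds the inner integral from below and `ν` would be
integrable; if it vanishes, so does the inner integral. -/
theorem maxKernelIntegral_eq_zero_of_not_integrableOn_right (hμ : AntitoneOn μ (Ioi 0))
    (hμ0 : ∀ t, 0 < t → 0 ≤ μ t) (hμi : ∀ y, IntegrableOn μ (Ioc 0 y))
    (hν : AntitoneOn ν (Ioi 0)) (hν0 : ∀ t, 0 < t → 0 ≤ ν t)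
    (hνi : ¬ ∀ y, IntegrableOn ν (Ioc 0 y)) (hK : AntitoneOn K (Ioi 0))
    (hK0 : ∀ t, 0 < t → 0 ≤ K t) (hKi : ∀ y, IntegrableOn K (Ioc 0 y)) (hξ : 0 < ξ)
    (hη : 0 < η) : maxKernelIntegral μ ν K ξ η = 0 := by
  set k := hardyAverage K
  set T := max ξ η
  have hk0 : ∀ x, 0 < x → 0 ≤ k x := fun x hx => hardyAverage_nonneg hK0 hx.le
  have hP : ∀ t ∈ Ioc 0 η, ∫ s in (0:ℝ)..ξ, μ s * k (max s t) ∈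
      Icc (k T * ∫ s in (0:ℝ)..ξ, μ s) (k t * ∫ s in (0:ℝ)..ξ, μ s) := fun t ht =>
    integral_mul_comp_max_mem_Icc hμ hμ0 (hμi ξ) (hK.hardyAverage hK0) hk0 hξ.le ht.1
      (ht.2.trans (le_max_right ξ η)) (le_max_left ξ η)
  have hδ0 : 0 ≤ k T * ∫ s in (0:ℝ)..ξ, μ s :=
    mul_nonneg (hk0 T (lt_max_of_lt_left hξ)) (primitive_nonneg hμ0 hξ.le)
  rcases hδ0.eq_or_lt with hδ | hδ
  · refine maxKernelIntegral_eq_zero hη.le fun t ht => ?_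
    rcases mul_eq_zero.1 hδ.symm with hkT | hMξ
    · rw [intervalIntegral.integral_of_le hξ.le]
      refine setIntegral_eq_zero_of_forall_eq_zero fun s hs => ?_
      have hx : 0 < max s t := lt_max_of_lt_right ht.1
      have hle : max s t * k (max s t) ≤ T * k T :=
        mul_hardyAverage_le_mul_hardyAverage hK0 hKi hx (max_le_max hs.2 ht.2)
      rw [hkT, mul_zero] at hle
      have h0 : hardyAverage K (max s t) = 0 := le_antisymm (by nlinarith) (hk0 _ hx)
      rw [h0, mul_zero]
    · exact le_antisymm (by simpa [hMξ] using (hP t ht).2) (by simpa [hMξ] using (hP t ht).1)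
  · rw [maxKernelIntegral, intervalIntegral.integral_undef]
    intro h
    refine hνi (hν.integrableOn_Ioc hη ?_)
    rw [intervalIntegrable_iff_integrableOn_Ioc_of_le hη.le] at h
    refine (h.const_mul (k T * ∫ s in (0:ℝ)..ξ, μ s)⁻¹).mono'
      (aemeasurable_restrict_of_antitoneOn measurableSet_Ioc
        (hν.mono Ioc_subset_Ioi_self)).aestronglyMeasurable
      ((ae_restrict_iff' measurableSet_Ioc).2 (.of_forall fun t ht => ?_))
    rw [Real.norm_of_nonneg (hν0 t ht.1), inv_mul_eq_div, le_div_iff₀ hδ]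
    exact mul_le_mul_of_nonneg_left (hP t ht).1 (hν0 t ht.1)

end Degenerate

section MainCase

variable {μ ν k : ℝ → ℝ} {ξ η : ℝ}

theorem ofReal_integral_mul_comp_max_le (hμ0 : ∀ s, 0 < s → 0 ≤ μ s)
    (hμi : IntegrableOn μ (Ioc 0 ξ)) {t : ℝ} (ht : 0 ≤ t) (hkt : 0 ≤ k t) (hξ : 0 ≤ ξ) :
    ENNReal.ofReal (∫ s in (0:ℝ)..ξ, μ s * k (max s t)) ≤
      ENNReal.ofReal (k t * ∫ u in (0:ℝ)..min ξ t, μ u) +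
        ∫⁻ s in Ioi t ∩ Ioc 0 ξ, ENNReal.ofReal (μ s * k s) := by
  rw [intervalIntegral.integral_of_le hξ]
  refine (ofReal_integral_le_lintegral_ofReal _).trans_eq ?_
  rw [← lintegral_inter_add_sdiff _ (Ioc 0 ξ) (measurableSet_Iic (a := t)), Ioc_inter_Iic,
    sdiff_eq, compl_Iic, inter_comm]
  congr 1
  · rw [setLIntegral_congr_fun measurableSet_Ioc fun s hs => by
        rw [max_eq_right (hs.2.trans (min_le_right ξ t))],
      ← ofReal_integral_eq_lintegral_ofReal
        ((hμi.mono_set (Ioc_subset_Ioc_right (min_le_left ξ t))).mul_const _)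
        ((ae_restrict_iff' measurableSet_Ioc).2
          (.of_forall fun s hs => mul_nonneg (hμ0 s hs.1) hkt)),
      integral_mul_const, intervalIntegral.integral_of_le (le_min hξ ht), mul_comm]
  · exact setLIntegral_congr_fun (measurableSet_Ioi.inter measurableSet_Ioc) fun s hs => by
      rw [max_eq_left hs.1.le]

theorem lintegral_ofReal_mul_integral_max_le (hμ : AntitoneOn μ (Ioi 0))
    (hμ0 : ∀ s, 0 < s → 0 ≤ μ s) (hμi : ∀ y, IntegrableOn μ (Ioc 0 y))
    (hν : AntitoneOn ν (Ioi 0)) (hν0 : ∀ t, 0 < t → 0 ≤ ν t) (hνi : ∀ y, IntegrableOn ν (Ioc 0 y))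
    (hk : AntitoneOn k (Ioi 0)) (hk0 : ∀ x, 0 < x → 0 ≤ k x) (hξ : 0 ≤ ξ) (hη : 0 ≤ η) :
    ∫⁻ t in Ioc 0 η, ENNReal.ofReal (ν t * ∫ s in (0:ℝ)..ξ, μ s * k (max s t)) ≤
      (∫⁻ t in Ioc 0 η, ENNReal.ofReal (ν t * k t * ∫ u in (0:ℝ)..min ξ t, μ u)) +
        ∫⁻ s in Ioc 0 ξ, ENNReal.ofReal (μ s * k s * ∫ u in (0:ℝ)..min η s, ν u) := by
  have aem : ∀ {f : ℝ → ℝ} (y : ℝ), AntitoneOn f (Ioi 0) →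
      AEMeasurable f (volume.restrict (Ioc 0 y)) := fun y hf =>
    aemeasurable_restrict_of_antitoneOn measurableSet_Ioc (hf.mono Ioc_subset_Ioi_self)
  have hM : AEMeasurable (fun t => ∫ u in (0:ℝ)..min ξ t, μ u) (volume.restrict (Ioc 0 η)) :=
    aemeasurable_restrict_of_monotoneOn measurableSet_Ioc fun a ha b _ hab =>
      primitive_mono hμ0 hμi (le_min hξ ha.1.le) (min_le_min_left ξ hab)
  have hA : AEMeasurable (fun t => ENNReal.ofReal (ν t * k t * ∫ u in (0:ℝ)..min ξ t, μ u))
      (volume.restrict (Ioc 0 η)) := (((aem η hν).mul (aem η hk)).mul hM).ennreal_ofReal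
  have hB : AEMeasurable (fun s => ENNReal.ofReal (μ s * k s)) (volume.restrict (Ioc 0 ξ)) :=
    ((aem ξ hμ).mul (aem ξ hk)).ennreal_ofReal
  calc _ ≤ ∫⁻ t in Ioc 0 η, (ENNReal.ofReal (ν t * k t * ∫ u in (0:ℝ)..min ξ t, μ u) +
          ENNReal.ofReal (ν t) * ∫⁻ s in Ioi t ∩ Ioc 0 ξ, ENNReal.ofReal (μ s * k s)) := by
        refine setLIntegral_mono' measurableSet_Ioc fun t ht => ?_
        rw [ENNReal.ofReal_mul (hν0 t ht.1), mul_assoc, ENNReal.ofReal_mul (hν0 t ht.1), ← mul_add]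
        gcongr
        exact ofReal_integral_mul_comp_max_le hμ0 (hμi ξ) ht.1.le (hk0 t ht.1) hξ
    _ = (∫⁻ t in Ioc 0 η, ENNReal.ofReal (ν t * k t * ∫ u in (0:ℝ)..min ξ t, μ u)) +
          ∫⁻ s in Ioc 0 ξ, ENNReal.ofReal (μ s * k s) *
            ∫⁻ t in Iio s ∩ Ioc 0 η, ENNReal.ofReal (ν t) := by
        rw [lintegral_add_left' hA]
        simp_rw [← Measure.restrict_restrict measurableSet_Ioi,
          ← Measure.restrict_restrict measurableSet_Iio]
        rw [lintegral_mul_setLIntegral_Ioi (aem η hν).ennreal_ofReal hB]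
    _ ≤ _ := by
        refine add_le_add le_rfl (setLIntegral_mono' measurableSet_Ioc fun s hs => ?_)
        have hm : 0 ≤ min η s := le_min hη hs.1.le
        rw [ENNReal.ofReal_mul (mul_nonneg (hμ0 s hs.1) (hk0 s hs.1)),
          intervalIntegral.integral_of_le hm, ofReal_integral_eq_lintegral_ofReal (hνi _)
            ((ae_restrict_iff' measurableSet_Ioc).2 (.of_forall fun t ht => hν0 t ht.1))]
        gcongr
        exact fun t ht => ⟨ht.2.1, le_min ht.2.2 ht.1.le⟩

end MainCase

theorem lintegral_ofReal_mul_comp_min_le {h G : ℝ → ℝ} {a b c D x y : ℝ} (ha : 0 ≤ a)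
    (hb : 0 < b) (hc : 0 ≤ c) (hx : 0 < x) (hy : 0 ≤ y) (hh : PowerDecay h c (1 - b))
    (hG0 : 0 ≤ G x) (hD : 0 ≤ D) (hhG : ∀ t, 0 < t → h t * G t ≤ D * t ^ (a + b - 1)) :
    ∫⁻ t in Ioc 0 y, ENNReal.ofReal (h t * G (min x t)) ≤
      ENNReal.ofReal (max 1 c * D * x ^ a * y ^ b / b) := by
  have hpt : ∀ t ∈ Ioc 0 y, h t * G (min x t) ≤ max 1 c * D * x ^ a * t ^ (b - 1) := by
    intro t ht
    rcases le_total t x with htx | hxt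
    · rw [min_eq_right htx]
      calc h t * G t ≤ D * t ^ (a + b - 1) := hhG t ht.1
        _ = D * t ^ a * t ^ (b - 1) := by
          rw [show a + b - 1 = a + (b - 1) by ring, Real.rpow_add ht.1]; ring
        _ ≤ D * x ^ a * t ^ (b - 1) := by
          gcongr
          · exact Real.rpow_nonneg ht.1.le _
          · exact ht.1.le
        _ ≤ max 1 c * D * x ^ a * t ^ (b - 1) := by
          simp only [mul_assoc]
          exact le_mul_of_one_le_left (mul_nonneg hD (mul_nonneg (Real.rpow_nonneg hx.le _)
            (Real.rpow_nonneg ht.1.le _))) (le_max_left 1 c)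
    · rw [min_eq_left hxt]
      calc h t * G x ≤ c * (t / x) ^ (-(1 - b)) * h x * G x :=
            mul_le_mul_of_nonneg_right (hh.le_of_le hx hxt) hG0
        _ ≤ c * (t / x) ^ (-(1 - b)) * (D * x ^ (a + b - 1)) := by
          rw [mul_assoc]
          exact mul_le_mul_of_nonneg_left (hhG x hx)
            (mul_nonneg hc (Real.rpow_nonneg (div_nonneg ht.1.le hx.le) _))
        _ = c * D * x ^ a * t ^ (b - 1) := by
          rw [neg_sub, Real.div_rpow (hx.trans_le hxt).le hx.le,
            show a + b - 1 = a + (b - 1) by ring, Real.rpow_add hx]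
          field_simp
        _ ≤ max 1 c * D * x ^ a * t ^ (b - 1) := by
          gcongr
          · exact Real.rpow_nonneg ht.1.le _
          · exact le_max_right 1 c
  have hC : 0 ≤ max 1 c * D * x ^ a := by positivity
  calc ∫⁻ t in Ioc 0 y, ENNReal.ofReal (h t * G (min x t))
      ≤ ∫⁻ t in Ioc 0 y, ENNReal.ofReal (max 1 c * D * x ^ a) * ENNReal.ofReal (t ^ (b - 1)) :=
        setLIntegral_mono' measurableSet_Ioc fun t ht => by
          rw [← ENNReal.ofReal_mul hC]; exact ENNReal.ofReal_le_ofReal (hpt t ht)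
    _ = ENNReal.ofReal (max 1 c * D * x ^ a * y ^ b / b) := by
        rw [lintegral_const_mul' _ _ ENNReal.ofReal_ne_top, lintegral_Ioc_ofReal_rpow hb hy,
          ← ENNReal.ofReal_mul hC, mul_div_assoc]

theorem mul_hardyAverage_mul_le {f K : ℝ → ℝ} {t G D e : ℝ} (hf : AntitoneOn f (Ioi 0))
    (hfi : IntegrableOn f (Ioc 0 t)) (hK0 : ∀ s, 0 < s → 0 ≤ K s) (hG : 0 ≤ G) (ht : 0 < t)
    (h : t ^ (-(1 + e)) * ((∫ u in (0:ℝ)..t, f u) * G * ∫ u in (0:ℝ)..t, K u) ≤ D) :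
    f t * hardyAverage K t * G ≤ D * t ^ (e - 1) := by
  have hL := primitive_nonneg hK0 ht.le
  calc f t * hardyAverage K t * G = t * f t * G * (∫ u in (0:ℝ)..t, K u) / t ^ 2 := by
        rw [hardyAverage]; field_simp
    _ ≤ (∫ u in (0:ℝ)..t, f u) * G * (∫ u in (0:ℝ)..t, K u) / t ^ 2 := by
        gcongr; exact hf.mul_le_primitive ht hfi
    _ = t ^ (e - 1) * (t ^ (-(1 + e)) * ((∫ u in (0:ℝ)..t, f u) * G * ∫ u in (0:ℝ)..t, K u)) := by
        rw [← mul_assoc, ← Real.rpow_add ht,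
          show e - 1 + -(1 + e) = -((2 : ℕ) : ℝ) by push_cast; ring, Real.rpow_neg ht.le,
          Real.rpow_natCast]
        field_simp
    _ ≤ D * t ^ (e - 1) := by
        rw [mul_comm D]; exact mul_le_mul_of_nonneg_left h (Real.rpow_nonneg ht.le _)

section MaxKernel

variable {μ ν K : ℝ → ℝ} {a b cμ cν D ξ η : ℝ}

theorem maxKernelIntegral_le_of_integrableOn (ha : 0 < a) (hb : 0 < b)
    (hμ : AntitoneOn μ (Ioi 0)) (hν : AntitoneOn ν (Ioi 0)) (hK : AntitoneOn K (Ioi 0))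
    (hμ0 : ∀ t, 0 < t → 0 ≤ μ t) (hν0 : ∀ t, 0 < t → 0 ≤ ν t) (hK0 : ∀ t, 0 < t → 0 ≤ K t)
    (hμi : ∀ y, IntegrableOn μ (Ioc 0 y)) (hνi : ∀ y, IntegrableOn ν (Ioc 0 y))
    (hμK : PowerDecay (μ * hardyAverage K) cμ (1 - a))
    (hνK : PowerDecay (ν * hardyAverage K) cν (1 - b)) (hcμ : 0 ≤ cμ) (hcν : 0 ≤ cν)
    (hD0 : 0 ≤ D)
    (hD : ∀ t, 0 < t → t ^ (-(1 + (a + b))) * ((∫ u in (0:ℝ)..t, μ u) *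
      (∫ u in (0:ℝ)..t, ν u) * ∫ u in (0:ℝ)..t, K u) ≤ D)
    (hξ : 0 < ξ) (hη : 0 < η) :
    maxKernelIntegral μ ν K ξ η ≤ (max 1 cν / b + max 1 cμ / a) * D * (ξ ^ a * η ^ b) := by
  have hA := lintegral_ofReal_mul_comp_min_le (h := ν * hardyAverage K)
    (G := fun x => ∫ u in (0:ℝ)..x, μ u) ha.le hb hcν hξ hη.le hνK
    (primitive_nonneg hμ0 hξ.le) hD0 fun t ht =>
      mul_hardyAverage_mul_le hν (hνi t) hK0 (primitive_nonneg hμ0 ht.le) ht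
        ((by ring : _ = _).trans_le (hD t ht))
  have hB := lintegral_ofReal_mul_comp_min_le (h := μ * hardyAverage K)
    (G := fun x => ∫ u in (0:ℝ)..x, ν u) hb.le ha hcμ hη hξ.le hμK
    (primitive_nonneg hν0 hη.le) hD0 fun t ht => by
      rw [add_comm b a]
      exact mul_hardyAverage_mul_le hμ (hμi t) hK0 (primitive_nonneg hν0 ht.le) ht
        (hD t ht)
  rw [maxKernelIntegral, intervalIntegral.integral_of_le hη.le,
    ← ENNReal.ofReal_le_ofReal_iff (by positivity)]
  calc _ ≤ _ := ofReal_integral_le_lintegral_ofReal _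
    _ ≤ _ := lintegral_ofReal_mul_integral_max_le hμ hμ0 hμi hν hν0 hνi (hK.hardyAverage hK0)
        (fun x hx => hardyAverage_nonneg hK0 hx.le) hξ.le hη.le
    _ ≤ _ := add_le_add hA hB
    _ = _ := by
        rw [← ENNReal.ofReal_add (by positivity) (by positivity)]
        congr 1
        ring

end MaxKernel

theorem maxKernelIntegral_le {μ ν K : ℝ → ℝ} {a b cμ cν D ξ η : ℝ} (ha : 0 < a) (hb : 0 < b)
    (hμ : AntitoneOn μ (Ioi 0)) (hν : AntitoneOn ν (Ioi 0)) (hK : AntitoneOn K (Ioi 0))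
    (hμ0 : ∀ t, 0 < t → 0 ≤ μ t) (hν0 : ∀ t, 0 < t → 0 ≤ ν t) (hK0 : ∀ t, 0 < t → 0 ≤ K t)
    (hμK : PowerDecay (μ * hardyAverage K) cμ (1 - a))
    (hνK : PowerDecay (ν * hardyAverage K) cν (1 - b)) (hcμ : 0 ≤ cμ) (hcν : 0 ≤ cν)
    (hD : ∀ t, 0 < t → t ^ (-(1 + (a + b))) * ((∫ u in (0:ℝ)..t, μ u) *
      (∫ u in (0:ℝ)..t, ν u) * ∫ u in (0:ℝ)..t, K u) ≤ D)
    (hξ : 0 < ξ) (hη : 0 < η) :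
    maxKernelIntegral μ ν K ξ η ≤ (max 1 cν / b + max 1 cμ / a) * D * (ξ ^ a * η ^ b) := by
  have hD0 : 0 ≤ D := (mul_nonneg (Real.rpow_nonneg zero_le_one _) (mul_nonneg (mul_nonneg
    (primitive_nonneg hμ0 zero_le_one) (primitive_nonneg hν0 zero_le_one))
    (primitive_nonneg hK0 zero_le_one))).trans (hD 1 one_pos)
  have hRHS : 0 ≤ (max 1 cν / b + max 1 cμ / a) * D * (ξ ^ a * η ^ b) := by positivity
  by_cases hKi : ∀ y, IntegrableOn K (Ioc 0 y)
  swap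
  · exact (maxKernelIntegral_eq_zero_of_not_integrableOn_kernel hK hKi hξ.le hη.le).trans_le hRHS
  by_cases hμi : ∀ y, IntegrableOn μ (Ioc 0 y)
  swap
  · exact (maxKernelIntegral_eq_zero_of_not_integrableOn_left hμ hμi hK hK0 hξ hη.le).trans_le hRHS
  by_cases hνi : ∀ y, IntegrableOn ν (Ioc 0 y)
  swap
  · exact (maxKernelIntegral_eq_zero_of_not_integrableOn_right hμ hμ0 hμi hν hν0 hνi hK hK0 hKi
      hξ hη).trans_le hRHS
  exact maxKernelIntegral_le_of_integrableOn ha hb hμ hν hK hμ0 hν0 hK0 hμi hνi hμK hνK hcμ hcν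
    hD0 hD hξ hη

theorem stmt3_general (p q α β ρ c1 c2 c3 : ℝ) (hp : 1 < p) (hq : 1 < q)
    (h1 : 1 ≤ ρ + α + 1 / p) (h2 : 1 ≤ ρ + β + (1 - 1 / q))
    (hc1 : 0 < c1) (hc2 : 0 < c2) (hc3 : 0 < c3) :
    ∃ C : ℝ, 0 < C ∧ ∀ μs νs Ks : ℝ → ℝ,
      AntitoneOn μs (Set.Ioi 0) → AntitoneOn νs (Set.Ioi 0) → AntitoneOn Ks (Set.Ioi 0) →
      (∀ t, 0 < t → 0 ≤ μs t) → (∀ t, 0 < t → 0 ≤ νs t) → (∀ t, 0 < t → 0 ≤ Ks t) →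
      (∀ l t : ℝ, 1 ≤ l → 0 < t → μs (l * t) ≤ c1 * l ^ (-α) * μs t) →
      (∀ l t : ℝ, 1 ≤ l → 0 < t → νs (l * t) ≤ c2 * l ^ (-β) * νs t) →
      (∀ l t : ℝ, 1 ≤ l → 0 < t → Ks (l * t) ≤ c3 * l ^ (-ρ) * Ks t) →
      ∀ D : ℝ,
        (∀ t, 0 < t → t ^ (-(2 + 1 / p - 1 / q)) *
            ((∫ s in (0:ℝ)..t, μs s) * (∫ s in (0:ℝ)..t, νs s) * (∫ s in (0:ℝ)..t, Ks s))
            ≤ D) →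
        ∀ ξ η : ℝ, 0 < ξ → 0 < η →
          η ^ (-(1 - 1 / q)) * ξ ^ (-(1 / p)) *
            (∫ t in (0:ℝ)..η, νs t * ∫ s in (0:ℝ)..ξ, μs s *
              ((1 / max s t) * ∫ u in (0:ℝ)..(max s t), Ks u)) ≤ C * D := by
  have ha : 0 < 1 / p := by positivity
  have hb : 0 < 1 - 1 / q := by rw [sub_pos, div_lt_one (by linarith)]; exact hq
  refine ⟨max 1 (c2 * c3) / (1 - 1 / q) + max 1 (c1 * c3) / (1 / p), by positivity, ?_⟩
  intro μ ν K hμ hν hK hμ0 hν0 hK0 hdμ hdν hdK D hD ξ η hξ hη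
  have hk : PowerDecay (hardyAverage K) c3 ρ := PowerDecay.hardyAverage hdK hc3.le hK0
  have hk0 : ∀ t, 0 < t → 0 ≤ hardyAverage K t := fun t ht => hardyAverage_nonneg hK0 ht.le
  have hμK : PowerDecay (μ * hardyAverage K) (c1 * c3) (1 - 1 / p) :=
    ((PowerDecay.mul hdμ hk hc1.le hμ0 hk0).mono_exponent (by positivity)
      (fun t ht => mul_nonneg (hμ0 t ht) (hk0 t ht)) (by linarith))
  have hνK : PowerDecay (ν * hardyAverage K) (c2 * c3) (1 - (1 - 1 / q)) :=
    ((PowerDecay.mul hdν hk hc2.le hν0 hk0).mono_exponent (by positivity)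
      (fun t ht => mul_nonneg (hν0 t ht) (hk0 t ht)) (by linarith))
  have key := maxKernelIntegral_le ha hb hμ hν hK hμ0 hν0 hK0 hμK hνK (by positivity)
    (by positivity) (fun t ht => by convert hD t ht using 4; ring) hξ hη (D := D)
  calc _ = η ^ (-(1 - 1 / q)) * ξ ^ (-(1 / p)) * maxKernelIntegral μ ν K ξ η := rfl
    _ ≤ η ^ (-(1 - 1 / q)) * ξ ^ (-(1 / p)) * ((max 1 (c2 * c3) / (1 - 1 / q) +
        max 1 (c1 * c3) / (1 / p)) * D * (ξ ^ (1 / p) * η ^ (1 - 1 / q))) :=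
      mul_le_mul_of_nonneg_left key (by positivity)
    _ = _ := by
      rw [Real.rpow_neg hη.le, Real.rpow_neg hξ.le]
      field_simp

theorem stmt3 (p q α β ρ c1 c2 c3 : ℝ) (hp : 1 < p) (hq : 1 < q)
    (hα : 0 ≤ α) (hβ : 0 ≤ β) (hρ : 0 ≤ ρ)
    (h1 : 1 ≤ ρ + α + 1 / p) (h2 : 1 ≤ ρ + β + (1 - 1 / q))
    (hc1 : 0 < c1) (hc2 : 0 < c2) (hc3 : 0 < c3) :
    ∃ C : ℝ, 0 < C ∧ ∀ μs νs Ks : ℝ → ℝ,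
      AntitoneOn μs (Set.Ioi 0) → AntitoneOn νs (Set.Ioi 0) → AntitoneOn Ks (Set.Ioi 0) →
      (∀ t, 0 < t → 0 ≤ μs t) → (∀ t, 0 < t → 0 ≤ νs t) → (∀ t, 0 < t → 0 ≤ Ks t) →
      (∀ l t : ℝ, 1 ≤ l → 0 < t → μs (l * t) ≤ c1 * l ^ (-α) * μs t) →
      (∀ l t : ℝ, 1 ≤ l → 0 < t → νs (l * t) ≤ c2 * l ^ (-β) * νs t) →
      (∀ l t : ℝ, 1 ≤ l → 0 < t → Ks (l * t) ≤ c3 * l ^ (-ρ) * Ks t) →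
      ∀ D : ℝ,
        (∀ t, 0 < t → t ^ (-(2 + 1 / p - 1 / q)) *
            ((∫ s in (0:ℝ)..t, μs s) * (∫ s in (0:ℝ)..t, νs s) * (∫ s in (0:ℝ)..t, Ks s))
            ≤ D) →
        ∀ ξ η : ℝ, 0 < ξ → 0 < η →
          η ^ (-(1 - 1 / q)) * ξ ^ (-(1 / p)) *
            (∫ t in (0:ℝ)..η, νs t * ∫ s in (0:ℝ)..ξ, μs s *
              ((1 / max s t) * ∫ u in (0:ℝ)..(max s t), Ks u)) ≤ C * D :=
  stmt3_general p q α β ρ c1 c2 c3 hp hq h1 h2 hc1 hc2 hc3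
end

section
/- Let 1 < p ≤ q < ∞ and 1 < r < ∞. If the convolution inequality ‖f*K‖_{L^q(ν)} ≤ C‖f‖_{L^p(μ^{−1})}‖K‖_{L^{r,∞}} holds for all f and K, then S := sup_{|E|=|W|>0} ν(E)μ(W) / ( |E|^{1+1/p−1/q} |E−W|^{1/r} ) < ∞, where E−W = {x−y : x∈E, y∈W} and the supremum is over measurable sets E, W of equal positive finite measure. -/
/-!
Test the inequality with `K = 1_G`, `G` a measurable hull of `E - W`, whose weak `L^r` norm is at
most `|E - W|^{1/r}`, and with `f = μ 1_W`, whose `L^p(μ⁻¹)` norm is at most `|W|^{1/p} = |E|^{1/p}`.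
For `y ∈ E` every `y - x` with `x ∈ W` lies in `G`, so `f * K ≡ μ(W)` on `E` and the left side is at
least `μ(W) ‖ν‖_{L^q(E)} ≥ μ(W) ν(E) |E|^{1/q - 1}` by Hölder; hence `S ≤ C`.
Since the Bochner integral defining `f * K` is `0` unless `f` is integrable, `W` is first cut down
to its intersections with a compact exhaustion and recovered by monotone convergence.
-/

open MeasureTheory Set
open scoped ENNReal Pointwise

/-- Decreasing rearrangement of `f` with respect to the measure `m`. -/
noncomputable def rearr {α : Type*} [MeasurableSpace α] (m : Measure α) (f : α → ℝ) (t : ℝ) : ℝ :=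
  sInf {s : ℝ | 0 ≤ s ∧ m {x | s < |f x|} ≤ ENNReal.ofReal t}

section Rearrangement

variable {α : Type*} [MeasurableSpace α] (m : Measure α)

lemma rearr_le_of_measure_le {f : α → ℝ} {s t : ℝ} (hs : 0 ≤ s)
    (h : m {x | s < |f x|} ≤ ENNReal.ofReal t) : rearr m f t ≤ s :=
  csInf_le ⟨0, fun _ hs' => hs'.1⟩ ⟨hs, h⟩

lemma rpow_mul_rearr_indicator_one_le {G : Set α} (hG : m G ≠ ⊤) {a t : ℝ} (ha : 0 ≤ a)
    (ht : 0 < t) : t ^ a * rearr m (G.indicator 1) t ≤ (m G).toReal ^ a := by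
  rcases le_or_gt (m G) (ENNReal.ofReal t) with hGt | htG
  · have hzero : {x | (0 : ℝ) < |G.indicator 1 x|} = G := by
      ext x; by_cases hx : x ∈ G <;> simp [hx]
    have hnonpos := rearr_le_of_measure_le m le_rfl (hzero ▸ hGt)
    exact (mul_nonpos_of_nonneg_of_nonpos (by positivity) hnonpos).trans (by positivity)
  · have hempty : {x | (1 : ℝ) < |G.indicator 1 x|} = ∅ := by
      ext x; by_cases hx : x ∈ G <;> simp [hx]
    have hone := rearr_le_of_measure_le m zero_le_one (f := G.indicator 1) (t := t)
      (by simp [hempty])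
    have htG' : t ≤ (m G).toReal := ((ENNReal.ofReal_lt_iff_lt_toReal ht.le hG).mp htG).le
    calc t ^ a * rearr m (G.indicator 1) t ≤ t ^ a * 1 := by gcongr
      _ ≤ (m G).toReal ^ a := by rw [mul_one]; gcongr

end Rearrangement

lemma lintegral_le_lintegral_rpow_mul_measure_univ {α : Type*} [MeasurableSpace α]
    {m : Measure α} {g : α → ℝ≥0∞} (hg : AEMeasurable g m) {q : ℝ} (hq : 1 < q) :
    ∫⁻ x, g x ∂m ≤ (∫⁻ x, g x ^ q ∂m) ^ (1 / q) * m univ ^ (1 - 1 / q) := by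
  have hconj : q.HolderConjugate q.conjExponent := .conjExponent hq
  have h := ENNReal.lintegral_mul_le_Lp_mul_Lq m hconj hg (aemeasurable_const (b := (1 : ℝ≥0∞)))
  simp only [Pi.mul_apply, mul_one, ENNReal.one_rpow, lintegral_const, one_mul] at h
  rwa [one_div q.conjExponent, ← hconj.one_sub_inv, ← one_div] at h

section TestFunctions

variable {X : Type*} [MeasurableSpace X] (m : Measure X)

lemma lintegral_rpow_abs_indicator_div_le {W : Set X} (hW : MeasurableSet W) {μ : X → ℝ}
    (hμ : ∀ x, 0 ≤ μ x) {p : ℝ} (hp : 0 < p) :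
    ∫⁻ x, (ENNReal.ofReal |W.indicator μ x| / ENNReal.ofReal (μ x)) ^ p ∂m ≤ m W := by
  calc ∫⁻ x, (ENNReal.ofReal |W.indicator μ x| / ENNReal.ofReal (μ x)) ^ p ∂m
      ≤ ∫⁻ x, W.indicator 1 x ∂m := by
        refine lintegral_mono fun x => ?_
        by_cases hx : x ∈ W
        · simp only [indicator_of_mem hx, abs_of_nonneg (hμ x), Pi.one_apply]
          exact ENNReal.rpow_le_one ENNReal.div_self_le_one hp.le
        · simp [indicator_of_notMem hx, ENNReal.zero_rpow_of_pos hp]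
    _ = m W := lintegral_indicator_one hW

lemma integral_indicator_sub_mul_indicator [Sub X] {G W : Set X} (hW : MeasurableSet W)
    {y : X} (hy : ∀ x ∈ W, y - x ∈ G) (g : X → ℝ) :
    ∫ x, G.indicator 1 (y - x) * W.indicator g x ∂m = ∫ x in W, g x ∂m := by
  rw [← integral_indicator hW]
  congr 1 with x
  by_cases hx : x ∈ W
  · simp [indicator_of_mem hx, indicator_of_mem (hy x hx)]
  · simp [indicator_of_notMem hx]

lemma ofReal_mul_lintegral_rpow_le {E : Set X} (hE : MeasurableSet E) {F : X → ℝ} {c : ℝ}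
    (hc : 0 ≤ c) (hF : ∀ y ∈ E, F y = c) (ν : X → ℝ) {q : ℝ} (hq : 0 < q) :
    ENNReal.ofReal c * (∫⁻ y in E, ENNReal.ofReal (ν y) ^ q ∂m) ^ (1 / q) ≤
      (∫⁻ y, ENNReal.ofReal (|F y| * ν y) ^ q ∂m) ^ (1 / q) := by
  have hrestrict : ENNReal.ofReal c ^ q * ∫⁻ y in E, ENNReal.ofReal (ν y) ^ q ∂m ≤
      ∫⁻ y, ENNReal.ofReal (|F y| * ν y) ^ q ∂m := by
    rw [← lintegral_const_mul' _ _ (ENNReal.rpow_ne_top_of_nonneg hq.le ENNReal.ofReal_ne_top)]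
    refine le_trans (le_of_eq ?_) (setLIntegral_le_lintegral E _)
    refine setLIntegral_congr_fun hE fun y hy => ?_
    rw [hF y hy, abs_of_nonneg hc, ENNReal.ofReal_mul hc, ENNReal.mul_rpow_of_nonneg _ _ hq.le]
  calc ENNReal.ofReal c * (∫⁻ y in E, ENNReal.ofReal (ν y) ^ q ∂m) ^ (1 / q)
      = (ENNReal.ofReal c ^ q * ∫⁻ y in E, ENNReal.ofReal (ν y) ^ q ∂m) ^ (1 / q) := by
        rw [ENNReal.mul_rpow_of_nonneg _ _ (by positivity), ← ENNReal.rpow_mul,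
          mul_one_div_cancel hq.ne', ENNReal.rpow_one]
    _ ≤ _ := by gcongr

end TestFunctions

lemma setLIntegral_eq_iSup_inter_compactCovering {X : Type*} [MeasurableSpace X]
    [TopologicalSpace X] [SigmaCompactSpace X] (m : Measure X) (s : Set X) (f : X → ℝ≥0∞) :
    ∫⁻ x in s, f x ∂m = ⨆ k, ∫⁻ x in s ∩ compactCovering X k, f x ∂m := by
  conv_lhs => rw [← inter_univ s, ← iUnion_compactCovering, inter_iUnion]
  exact setLIntegral_iUnion_of_directed f <| Monotone.directed_le fun _ _ hkl =>
    inter_subset_inter_right s (compactCovering_subset X hkl)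

def ConvolutionInequality {X : Type*} [MeasurableSpace X] [Sub X] (m : Measure X)
    (p q r : ℝ) (μ ν : X → ℝ) (C : ℝ) : Prop :=
  ∀ (f K : X → ℝ) (M : ℝ), 0 ≤ M →
    (∀ t : ℝ, 0 < t → t ^ (1 / r) * rearr m K t ≤ M) →
    (∫⁻ y, ENNReal.ofReal (|∫ x, K (y - x) * f x ∂m| * ν y) ^ q ∂m) ^ (1 / q) ≤
      ENNReal.ofReal C *
        (∫⁻ x, (ENNReal.ofReal |f x| / ENNReal.ofReal (μ x)) ^ p ∂m) ^ (1 / p) *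
        ENNReal.ofReal M

theorem ConvolutionInequality.lintegral_mul_lintegral_le {X : Type*} [MeasurableSpace X] [Sub X]
    {m : Measure X} {p q r C : ℝ} {μ ν : X → ℝ} (h : ConvolutionInequality m p q r μ ν C)
    (hp : 0 < p) (hq : 1 < q) (hr : 0 ≤ r) (hμ : ∀ x, 0 ≤ μ x) (hν : AEMeasurable ν m)
    {E W G : Set X} (hE : MeasurableSet E) (hW : MeasurableSet W) (hμW : IntegrableOn μ W m)
    (hEWG : E - W ⊆ G) (hG : m G ≠ ⊤) :
    (∫⁻ x in W, ENNReal.ofReal (μ x) ∂m) * ∫⁻ y in E, ENNReal.ofReal (ν y) ∂m ≤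
      ENNReal.ofReal C * m W ^ (1 / p) * m G ^ (1 / r) * m E ^ (1 - 1 / q) := by
  set I := ∫ x in W, μ x ∂m
  set Nq := (∫⁻ y in E, ENNReal.ofReal (ν y) ^ q ∂m) ^ (1 / q)
  have hI : ENNReal.ofReal I = ∫⁻ x in W, ENNReal.ofReal (μ x) ∂m :=
    ofReal_integral_eq_lintegral_ofReal hμW (.of_forall hμ)
  have hM : ENNReal.ofReal ((m G).toReal ^ (1 / r)) = m G ^ (1 / r) := by
    rw [ENNReal.toReal_rpow, ENNReal.ofReal_toReal (by finiteness)]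
  have hconv := h (W.indicator μ) (G.indicator 1) _ (by positivity)
    fun t ht => rpow_mul_rearr_indicator_one_le m hG (one_div_nonneg.2 hr) ht
  have hlower : ENNReal.ofReal I * Nq ≤ _ :=
    ofReal_mul_lintegral_rpow_le m hE (setIntegral_nonneg hW fun x _ => hμ x)
      (fun y hy => integral_indicator_sub_mul_indicator m hW
        (fun x hx => hEWG (sub_mem_sub hy hx)) μ) ν (by linarith)
  have hnorm := lintegral_rpow_abs_indicator_div_le m hW hμ hp
  have hHolder : ∫⁻ y in E, ENNReal.ofReal (ν y) ∂m ≤ Nq * m E ^ (1 - 1 / q) := by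
    simpa only [Measure.restrict_apply_univ] using
      lintegral_le_lintegral_rpow_mul_measure_univ hν.restrict.ennreal_ofReal hq
  calc (∫⁻ x in W, ENNReal.ofReal (μ x) ∂m) * ∫⁻ y in E, ENNReal.ofReal (ν y) ∂m
      ≤ ENNReal.ofReal I * Nq * m E ^ (1 - 1 / q) := by
        rw [← hI, mul_assoc]; gcongr
    _ ≤ ENNReal.ofReal C * m W ^ (1 / p) * m G ^ (1 / r) * m E ^ (1 - 1 / q) := by
        rw [← hM]
        gcongr ?_ * _
        exact hlower.trans (hconv.trans (by gcongr))

theorem stmt5_general (n : ℕ) (p q r : ℝ)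
    (hp : 1 < p) (hpq : p ≤ q) (hr : 1 < r)
    (μ ν : EuclideanSpace ℝ (Fin n) → ℝ)
    (hμ0 : ∀ x, 0 ≤ μ x)
    (hμl : LocallyIntegrable μ volume) (hνl : LocallyIntegrable ν volume)
    (C : ℝ) (hC : 0 < C)
    (hbound : ∀ (f K : EuclideanSpace ℝ (Fin n) → ℝ) (M : ℝ), 0 ≤ M →
      (∀ t : ℝ, 0 < t → t ^ (1 / r) * rearr volume K t ≤ M) →
      (∫⁻ y, ENNReal.ofReal (|∫ x, K (y - x) * f x| * ν y) ^ q) ^ (1 / q) ≤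
        ENNReal.ofReal C *
          (∫⁻ x, (ENNReal.ofReal |f x| / ENNReal.ofReal (μ x)) ^ p) ^ (1 / p) *
          ENNReal.ofReal M) :
    ∃ S : ℝ, 0 < S ∧ ∀ E W : Set (EuclideanSpace ℝ (Fin n)),
      MeasurableSet E → MeasurableSet W → volume E = volume W →
      0 < volume E → volume E < ⊤ →
      (∫⁻ y in E, ENNReal.ofReal (ν y)) * (∫⁻ x in W, ENNReal.ofReal (μ x)) ≤
        ENNReal.ofReal S * volume E ^ (1 + 1 / p - 1 / q) * volume (E - W) ^ (1 / r) := by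
  have hineq : ConvolutionInequality volume p q r μ ν C := hbound
  refine ⟨C, hC, fun E W hE hW hEW hE0 hEtop => ?_⟩
  by_cases hEWtop : volume (E - W) = ⊤
  · rw [hEWtop, ENNReal.top_rpow_of_pos (by positivity), ENNReal.mul_top (by positivity)]
    exact le_top
  have hexp : volume E ^ (1 / p) * volume E ^ (1 - 1 / q) = volume E ^ (1 + 1 / p - 1 / q) := by
    rw [← ENNReal.rpow_add _ _ hE0.ne' hEtop.ne]; ring_nf
  rw [mul_comm, setLIntegral_eq_iSup_inter_compactCovering, ENNReal.iSup_mul]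
  refine iSup_le fun k => ?_
  calc _ ≤ ENNReal.ofReal C * volume (W ∩ compactCovering _ k) ^ (1 / p) *
        volume (toMeasurable volume (E - W)) ^ (1 / r) * volume E ^ (1 - 1 / q) :=
        hineq.lintegral_mul_lintegral_le (by linarith) (by linarith) (by linarith) hμ0
          hνl.aestronglyMeasurable.aemeasurable hE (hW.inter (isCompact_compactCovering _ k).measurableSet)
          ((hμl.integrableOn_isCompact (isCompact_compactCovering _ k)).mono_set
            inter_subset_right)
          ((sub_subset_sub_left inter_subset_left).trans (subset_toMeasurable _ _))
          (by rwa [measure_toMeasurable])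
    _ ≤ ENNReal.ofReal C * volume E ^ (1 / p) * volume (E - W) ^ (1 / r) *
        volume E ^ (1 - 1 / q) := by
        rw [measure_toMeasurable, hEW]
        gcongr
        exact inter_subset_left
    _ = _ := by rw [← hexp]; ring

theorem stmt5 (n : ℕ) (hn : 0 < n) (p q r : ℝ)
    (hp : 1 < p) (hpq : p ≤ q) (hr : 1 < r)
    (μ ν : EuclideanSpace ℝ (Fin n) → ℝ)
    (hμ0 : ∀ x, 0 ≤ μ x) (hν0 : ∀ x, 0 ≤ ν x)
    (hμl : LocallyIntegrable μ volume) (hνl : LocallyIntegrable ν volume)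
    (C : ℝ) (hC : 0 < C)
    (hbound : ∀ (f K : EuclideanSpace ℝ (Fin n) → ℝ) (M : ℝ), 0 ≤ M →
      (∀ t : ℝ, 0 < t → t ^ (1 / r) * rearr volume K t ≤ M) →
      (∫⁻ y, ENNReal.ofReal (|∫ x, K (y - x) * f x| * ν y) ^ q) ^ (1 / q) ≤
        ENNReal.ofReal C *
          (∫⁻ x, (ENNReal.ofReal |f x| / ENNReal.ofReal (μ x)) ^ p) ^ (1 / p) *
          ENNReal.ofReal M) :
    ∃ S : ℝ, 0 < S ∧ ∀ E W : Set (EuclideanSpace ℝ (Fin n)),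
      MeasurableSet E → MeasurableSet W → volume E = volume W →
      0 < volume E → volume E < ⊤ →
      (∫⁻ y in E, ENNReal.ofReal (ν y)) * (∫⁻ x in W, ENNReal.ofReal (μ x)) ≤
        ENNReal.ofReal S * volume E ^ (1 + 1 / p - 1 / q) * volume (E - W) ^ (1 / r) :=
  stmt5_general n p q r hp hpq hr μ ν hμ0 hμl hνl C hC hbound
end

section
/- Let 1 < p, q < ∞, 1 < θ ≤ ∞, and suppose the weighted Young inequality ‖f*K‖_{L^q_{−β}(ℝ^n)} ≤ C‖f‖_{L^p_α(ℝ^n)}‖K‖_{L^θ_s(ℝ^n)} holds for all f and K. Then necessarily α < n/p', β < n/q, β + s ≥ 0, and α + s ≥ 0. -/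
/-!
Each condition comes from testing the inequality on a family of functions and letting a parameter
degenerate. When `f` and `K` are indicators of balls of radii `1` and `3` centred at `a` and `b`,
the convolution is constant on the unit ball around `a + b`, so the three weighted norms are
comparable to the weights at the centres: `|a| = 2, |b| = R` gives `R^(-β) ≲ R^s`, and `|a| = R`
with `a + b` fixed gives `1 ≲ R^(α + s)`. With `a + b = 0` the left-hand side dominates
`(∫_{|y| < 1} |y|^(-βq))^(1/q)`, which is infinite unless `βq < n`. Finally `f_R = |x|^(1/R - n)`
on the unit ball has `∫ f_R ≈ R`, while `‖f_R‖_{L^p_α} ≲ R^(1/p)` as soon as `α ≥ n/p'`.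
-/

open MeasureTheory Set
open scoped ENNReal

/-- The norm of the power-weighted space `L^θ_s`, `1 < θ ≤ ∞`. -/
noncomputable def powerWeightedNorm (n : ℕ) (θ : ℝ≥0∞) (s : ℝ)
    (K : EuclideanSpace ℝ (Fin n) → ℝ) : ℝ≥0∞ :=
  if θ = ⊤ then essSup (fun x => ENNReal.ofReal (|K x| * ‖x‖ ^ s)) volume
  else (∫⁻ x, ENNReal.ofReal (|K x| * ‖x‖ ^ s) ^ θ.toReal) ^ (1 / θ.toReal)

open Filter Metric Module

noncomputable def weightedNorm {E : Type*} [Norm E] [MeasurableSpace E] (μ : Measure E)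
    (p w : ℝ) (f : E → ℝ) : ℝ≥0∞ :=
  (∫⁻ x, ENNReal.ofReal (|f x| * ‖x‖ ^ w) ^ p ∂μ) ^ (1 / p)

lemma ofReal_rpow_mul_measure_rpow {α : Type*} [MeasurableSpace α] {μ : Measure α} {S : Set α}
    {p M : ℝ} (hp : 0 < p) (hM : 0 ≤ M) (hS : μ S ≠ ∞) :
    (ENNReal.ofReal M ^ p * μ S) ^ (1 / p) = ENNReal.ofReal (M * μ.real S ^ (1 / p)) := by
  rw [ENNReal.mul_rpow_of_nonneg _ _ (by positivity), ← ENNReal.rpow_mul,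
    mul_one_div_cancel hp.ne', ENNReal.rpow_one, ← ofReal_measureReal hS,
    ENNReal.ofReal_rpow_of_nonneg measureReal_nonneg (by positivity), ← ENNReal.ofReal_mul hM]

section WeightedNorm

variable {E : Type*} [Norm E] [MeasurableSpace E] {μ : Measure E} {p w M : ℝ} {f : E → ℝ}
  {S : Set E}

lemma ofReal_le_weightedNorm (hp : 0 < p) (hM : 0 ≤ M) (hSm : MeasurableSet S) (hS : μ S ≠ ∞)
    (h : ∀ x ∈ S, M ≤ |f x| * ‖x‖ ^ w) :
    ENNReal.ofReal (M * μ.real S ^ (1 / p)) ≤ weightedNorm μ p w f := by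
  rw [← ofReal_rpow_mul_measure_rpow hp hM hS, ← setLIntegral_const]
  refine ENNReal.rpow_le_rpow ?_ (by positivity)
  calc ∫⁻ _ in S, ENNReal.ofReal M ^ p ∂μ
      ≤ ∫⁻ x in S, ENNReal.ofReal (|f x| * ‖x‖ ^ w) ^ p ∂μ :=
        setLIntegral_mono' hSm fun x hx =>
          ENNReal.rpow_le_rpow (ENNReal.ofReal_le_ofReal (h x hx)) hp.le
    _ ≤ _ := setLIntegral_le_lintegral _ _

lemma weightedNorm_le_ofReal (hp : 0 < p) (hM : 0 ≤ M) (hSm : MeasurableSet S) (hS : μ S ≠ ∞)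
    (hf : ∀ x ∉ S, f x = 0) (h : ∀ x ∈ S, |f x| * ‖x‖ ^ w ≤ M) :
    weightedNorm μ p w f ≤ ENNReal.ofReal (M * μ.real S ^ (1 / p)) := by
  rw [← ofReal_rpow_mul_measure_rpow hp hM hS, ← lintegral_indicator_const hSm]
  refine ENNReal.rpow_le_rpow (lintegral_mono fun x => ?_) (by positivity)
  by_cases hx : x ∈ S
  · rw [indicator_of_mem hx]
    exact ENNReal.rpow_le_rpow (ENNReal.ofReal_le_ofReal (h x hx)) hp.le
  · rw [indicator_of_notMem hx, hf x hx, abs_zero, zero_mul, ENNReal.ofReal_zero,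
      ENNReal.zero_rpow_of_pos hp]

lemma weightedNorm_indicator_le (hp : 0 < p) (hM : 0 ≤ M) (hSm : MeasurableSet S)
    (hS : μ S ≠ ∞) (h : ∀ x ∈ S, ‖x‖ ^ w ≤ M) :
    weightedNorm μ p w (S.indicator 1) ≤ ENNReal.ofReal (M * μ.real S ^ (1 / p)) :=
  weightedNorm_le_ofReal hp hM hSm hS (fun x hx => indicator_of_notMem hx _)
    fun x hx => by simpa [indicator_of_mem hx] using h x hx

end WeightedNorm

lemma rpow_le_two_rpow_abs_mul {x y t : ℝ} (hy : 0 < y) (h₁ : y ≤ 2 * x) (h₂ : x ≤ 2 * y) :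
    x ^ t ≤ 2 ^ |t| * y ^ t := by
  have hx : 0 < x := by linarith
  have hlog : |Real.log x - Real.log y| ≤ Real.log 2 := by
    have h₁' := Real.log_le_log hy h₁
    have h₂' := Real.log_le_log hx h₂
    rw [Real.log_mul two_ne_zero hx.ne'] at h₁'
    rw [Real.log_mul two_ne_zero hy.ne'] at h₂'
    exact abs_sub_le_iff.2 ⟨by linarith, by linarith⟩
  have hexp : t * (Real.log x - Real.log y) ≤ |t| * Real.log 2 :=
    (le_abs_self _).trans (by rw [abs_mul]; exact mul_le_mul_of_nonneg_left hlog (abs_nonneg t))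
  rw [Real.rpow_def_of_pos hx, Real.rpow_def_of_pos two_pos, Real.rpow_def_of_pos hy,
    ← Real.exp_add]
  exact Real.exp_le_exp.2 (by linarith)

lemma le_of_forall_mul_rpow_le {c D u v R₀ : ℝ} (hc : 0 < c)
    (h : ∀ R ≥ R₀, c * R ^ u ≤ D * R ^ v) : u ≤ v := by
  by_contra! hvu
  have hlim : Tendsto (fun R : ℝ => c * R ^ (u - v)) atTop atTop :=
    (tendsto_rpow_atTop (by linarith)).const_mul_atTop hc
  obtain ⟨R, hR, hR₀, hRpos⟩ :=
    ((hlim.eventually_gt_atTop D).and ((eventually_ge_atTop R₀).and (eventually_gt_atTop 0))).exists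
  have hRv : 0 < R ^ v := Real.rpow_pos_of_pos hRpos v
  have : c * R ^ (u - v) * R ^ v ≤ D * R ^ v := by
    rw [mul_assoc, ← Real.rpow_add hRpos, sub_add_cancel]; exact h R hR₀
  linarith [le_of_mul_le_mul_right this hRv]

lemma exists_norm_smul_eq_abs {E : Type*} [NormedAddCommGroup E] [NormedSpace ℝ E]
    [Nontrivial E] : ∃ e : E, ∀ t : ℝ, ‖t • e‖ = |t| :=
  let ⟨e, he⟩ := exists_norm_eq E zero_le_one
  ⟨e, fun t => by rw [norm_smul, he, mul_one, Real.norm_eq_abs]⟩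

section Comparable

variable {E : Type*} [SeminormedAddCommGroup E] {c x : E} {r R : ℝ}

lemma norm_comparable_of_mem_closedBall (hx : x ∈ closedBall c r) (h₁ : R ≤ 2 * (‖c‖ - r))
    (h₂ : ‖c‖ + r ≤ 2 * R) : R ≤ 2 * ‖x‖ ∧ ‖x‖ ≤ 2 * R := by
  have hxc := norm_le_of_mem_closedBall hx
  have hcx := norm_le_of_mem_closedBall (mem_closedBall_comm.1 hx)
  constructor <;> linarith

lemma rpow_norm_le_of_mem_closedBall (t : ℝ) (hR : 0 < R) (hx : x ∈ closedBall c r)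
    (h₁ : R ≤ 2 * (‖c‖ - r)) (h₂ : ‖c‖ + r ≤ 2 * R) : ‖x‖ ^ t ≤ 2 ^ |t| * R ^ t :=
  let ⟨h₁', h₂'⟩ := norm_comparable_of_mem_closedBall hx h₁ h₂
  rpow_le_two_rpow_abs_mul hR h₁' h₂'

lemma rpow_div_le_rpow_norm_of_mem_closedBall (t : ℝ) (hR : 0 < R) (hx : x ∈ closedBall c r)
    (h₁ : R ≤ 2 * (‖c‖ - r)) (h₂ : ‖c‖ + r ≤ 2 * R) : R ^ t / 2 ^ |t| ≤ ‖x‖ ^ t := by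
  obtain ⟨h₁', h₂'⟩ := norm_comparable_of_mem_closedBall hx h₁ h₂
  rw [div_le_iff₀' (by positivity)]
  exact rpow_le_two_rpow_abs_mul (by linarith) h₂' h₁'

end Comparable

lemma integral_indicator_closedBall_sub_mul {E : Type*} [NormedAddCommGroup E]
    [MeasurableSpace E] (μ : Measure E) {f : E → ℝ} {a b y : E} {r r' ρ : ℝ}
    (hf : ∀ x ∉ closedBall a r, f x = 0) (hy : y ∈ closedBall (a + b) r') (hρ : r + r' ≤ ρ) :
    ∫ x, (closedBall b ρ).indicator 1 (y - x) * f x ∂μ = ∫ x, f x ∂μ := by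
  congr 1 with x
  by_cases hx : x ∈ closedBall a r
  · have hyx : y - x ∈ closedBall b ρ := by
      rw [mem_closedBall, dist_eq_norm] at hx hy ⊢
      calc ‖y - x - b‖ = ‖(y - (a + b)) + (a - x)‖ := by congr 1; abel
        _ ≤ r' + r := (norm_add_le _ _).trans (add_le_add hy (by rwa [norm_sub_rev]))
        _ ≤ ρ := by linarith
    rw [indicator_of_mem hyx, Pi.one_apply, one_mul]
  · rw [hf x hx, mul_zero]

lemma pow_sub_one_mul_rpow {y : ℝ} (hy : 0 < y) {d : ℕ} (hd : 1 ≤ d) (t : ℝ) :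
    y ^ (d - 1) * y ^ t = y ^ ((d : ℝ) - 1 + t) := by
  rw [Real.rpow_add hy, ← Real.rpow_natCast, Nat.cast_sub hd, Nat.cast_one]

section Radial

variable {E : Type*} [NormedAddCommGroup E] [NormedSpace ℝ E] [FiniteDimensional ℝ E]
  [MeasurableSpace E] [BorelSpace E] [Nontrivial E] (μ : Measure E) [μ.IsAddHaarMeasure]

lemma integrableOn_ball_norm_rpow_iff {r t : ℝ} (hr : 0 < r) :
    IntegrableOn (fun x : E => ‖x‖ ^ t) (ball 0 r) μ ↔ -(finrank ℝ E : ℝ) < t := by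
  simp only [integrableOn_fun_norm_addHaar μ (f := fun y => y ^ t), smul_eq_mul]
  rw [integrableOn_congr_fun (fun y hy => pow_sub_one_mul_rpow hy.1 finrank_pos t)
      measurableSet_Ioo, intervalIntegral.integrableOn_Ioo_rpow_iff hr]
  constructor <;> intro h <;> linarith

lemma integral_ball_norm_rpow {t : ℝ} (ht : -(finrank ℝ E : ℝ) < t) :
    ∫ x in ball (0 : E) 1, ‖x‖ ^ t ∂μ =
      finrank ℝ E * μ.real (ball 0 1) / (finrank ℝ E + t) := by
  have hradial : ∫ y in Ioi (0 : ℝ), y ^ (finrank ℝ E - 1) • (Iio 1).indicator (· ^ t) y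
      = 1 / (finrank ℝ E + t) := by
    calc _ = ∫ y in Ioo (0 : ℝ) 1, y ^ ((finrank ℝ E : ℝ) - 1 + t) := by
          rw [← Ioi_inter_Iio, ← setIntegral_indicator measurableSet_Iio]
          refine setIntegral_congr_fun measurableSet_Ioi fun y hy => ?_
          by_cases h1 : y < 1
          · simp [h1, pow_sub_one_mul_rpow (mem_Ioi.1 hy) finrank_pos]
          · simp [h1]
      _ = 1 / (finrank ℝ E + t) := by
          rw [← integral_Ioc_eq_integral_Ioo, ← intervalIntegral.integral_of_le zero_le_one,
            integral_rpow (Or.inl (by linarith)), Real.zero_rpow (by linarith), Real.one_rpow]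
          ring_nf
  have hball : (ball (0 : E) 1).indicator (fun x => ‖x‖ ^ t)
      = fun x => (Iio 1).indicator (· ^ t) ‖x‖ := by
    ext x; simp [indicator]
  rw [← integral_indicator measurableSet_ball, hball, integral_fun_norm_addHaar μ, hradial,
    nsmul_eq_mul, smul_eq_mul]
  ring

lemma lintegral_ball_norm_rpow_eq_top {r t : ℝ} (hr : 0 < r) (ht : t ≤ -(finrank ℝ E : ℝ)) :
    ∫⁻ x in ball (0 : E) r, ENNReal.ofReal (‖x‖ ^ t) ∂μ = ∞ := by
  by_contra hfin
  have hint : IntegrableOn (fun x : E => ‖x‖ ^ t) (ball 0 r) μ :=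
    ⟨(continuous_norm.measurable.pow_const t).aestronglyMeasurable,
      (hasFiniteIntegral_iff_ofReal (.of_forall fun x => by positivity)).2
        (lt_top_iff_ne_top.2 hfin)⟩
  linarith [(integrableOn_ball_norm_rpow_iff μ hr).1 hint]

lemma weightedNorm_eq_top {p w c r : ℝ} {f : E → ℝ} (hp : 0 < p) (hr : 0 < r) (hc : c ≠ 0)
    (hf : ∀ x ∈ ball 0 r, f x = c) (hw : w * p ≤ -(finrank ℝ E : ℝ)) :
    weightedNorm μ p w f = ∞ := by
  refine (ENNReal.rpow_eq_top_iff_of_pos (by positivity)).2 (eq_top_iff.2 ?_)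
  calc ∞ = ENNReal.ofReal (|c| ^ p) *
        ∫⁻ x in ball (0 : E) r, ENNReal.ofReal (‖x‖ ^ (w * p)) ∂μ := by
        rw [lintegral_ball_norm_rpow_eq_top μ hr hw,
          ENNReal.mul_top (by simpa using Real.rpow_pos_of_pos (abs_pos.2 hc) p)]
    _ = ∫⁻ x in ball (0 : E) r, ENNReal.ofReal (|f x| * ‖x‖ ^ w) ^ p ∂μ := by
        rw [← lintegral_const_mul' _ _ ENNReal.ofReal_ne_top]
        refine setLIntegral_congr_fun measurableSet_ball fun x hx => ?_
        rw [hf x hx, ← ENNReal.ofReal_mul (by positivity), Real.rpow_mul (norm_nonneg x),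
          ← Real.mul_rpow (abs_nonneg c) (by positivity),
          ENNReal.ofReal_rpow_of_nonneg (by positivity) hp.le]
    _ ≤ _ := setLIntegral_le_lintegral _ _

lemma weightedNorm_indicator_ball_norm_rpow {p w σ : ℝ} (hp : 0 < p)
    (h : -(finrank ℝ E : ℝ) < (σ + w) * p) :
    weightedNorm μ p w ((ball (0 : E) 1).indicator fun x => ‖x‖ ^ σ) =
      ENNReal.ofReal
        ((finrank ℝ E * μ.real (ball 0 1) / (finrank ℝ E + (σ + w) * p)) ^ (1 / p)) := by
  have hpt : ∀ᵐ x ∂μ,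
      ENNReal.ofReal (|(ball (0 : E) 1).indicator (fun x => ‖x‖ ^ σ) x| * ‖x‖ ^ w) ^ p
        = (ball (0 : E) 1).indicator (fun x => ENNReal.ofReal (‖x‖ ^ ((σ + w) * p))) x := by
    filter_upwards [μ.ae_ne 0] with x hx
    have hx0 : 0 < ‖x‖ := norm_pos_iff.2 hx
    by_cases hb : x ∈ ball (0 : E) 1
    · rw [indicator_of_mem hb, indicator_of_mem hb, abs_of_pos (by positivity),
        ← Real.rpow_add hx0, ENNReal.ofReal_rpow_of_nonneg (by positivity) hp.le,
        ← Real.rpow_mul hx0.le]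
    · rw [indicator_of_notMem hb, indicator_of_notMem hb, abs_zero, zero_mul,
        ENNReal.ofReal_zero, ENNReal.zero_rpow_of_pos hp]
  rw [weightedNorm, lintegral_congr_ae hpt, lintegral_indicator measurableSet_ball,
    ← ofReal_integral_eq_lintegral_ofReal ((integrableOn_ball_norm_rpow_iff μ one_pos).2 h)
      (.of_forall fun x => by positivity), integral_ball_norm_rpow μ h,
    ENNReal.ofReal_rpow_of_nonneg (div_nonneg (by positivity) (by linarith)) (by positivity)]

lemma integral_indicator_ball_norm_rpow_inv_sub {R : ℝ} (hR : 0 < R) :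
    ∫ x, (ball (0 : E) 1).indicator (fun x => ‖x‖ ^ (R⁻¹ - finrank ℝ E)) x ∂μ =
      finrank ℝ E * μ.real (ball 0 1) * R := by
  rw [integral_indicator measurableSet_ball,
    integral_ball_norm_rpow μ (by linarith [inv_pos.2 hR])]
  field_simp
  ring

lemma weightedNorm_indicator_ball_norm_rpow_inv_sub_le {p α R : ℝ} (hp : 0 < p) (hR : 0 < R)
    (hα : finrank ℝ E * (1 - 1 / p) ≤ α) :
    weightedNorm μ p α ((ball (0 : E) 1).indicator fun x => ‖x‖ ^ (R⁻¹ - finrank ℝ E)) ≤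
      ENNReal.ofReal ((finrank ℝ E * μ.real (ball 0 1) / p) ^ (1 / p) * R ^ (1 / p)) := by
  have hαp : finrank ℝ E * p - finrank ℝ E ≤ α * p := by
    have := mul_le_mul_of_nonneg_right hα hp.le
    rwa [mul_assoc, sub_mul, one_div_mul_cancel hp.ne', one_mul, mul_sub, mul_one] at this
  have hRp : 0 < p * R⁻¹ := by positivity
  have hden : p * R⁻¹ ≤ finrank ℝ E + (R⁻¹ - finrank ℝ E + α) * p := by linarith
  rw [weightedNorm_indicator_ball_norm_rpow μ hp (by linarith),
    ← Real.mul_rpow (by positivity) hR.le]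
  refine ENNReal.ofReal_le_ofReal
    (Real.rpow_le_rpow (div_nonneg (by positivity) (by linarith)) ?_ (by positivity))
  calc _ ≤ finrank ℝ E * μ.real (ball 0 1) / (p * R⁻¹) :=
        div_le_div_of_nonneg_left (by positivity) hRp hden
    _ = _ := by field_simp

end Radial

lemma powerWeightedNorm_indicator_le {n : ℕ} {θ : ℝ≥0∞} {s M : ℝ}
    {S : Set (EuclideanSpace ℝ (Fin n))} (hθ : θ ≠ 0) (hM : 0 ≤ M) (hSm : MeasurableSet S)
    (hS : volume S ≠ ∞) (h : ∀ x ∈ S, ‖x‖ ^ s ≤ M) :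
    powerWeightedNorm n θ s (S.indicator 1) ≤
      ENNReal.ofReal (M * volume.real S ^ (1 / θ.toReal)) := by
  unfold powerWeightedNorm
  split_ifs with hθtop
  · -- for `θ = ∞` we have `1 / θ.toReal = 0`, so the volume factor is `1`
    rw [hθtop, ENNReal.toReal_top, div_zero, Real.rpow_zero, mul_one]
    refine essSup_le_of_ae_le _ (.of_forall fun x => ENNReal.ofReal_le_ofReal ?_)
    by_cases hx : x ∈ S
    · simpa [indicator_of_mem hx] using h x hx
    · simpa [indicator_of_notMem hx] using hM
  · exact weightedNorm_indicator_le (ENNReal.toReal_pos hθ hθtop) hM hSm hS h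

def YoungInequality (n : ℕ) (p q α β s : ℝ) (θ : ℝ≥0∞) (C : ℝ) : Prop :=
  ∀ f K : EuclideanSpace ℝ (Fin n) → ℝ,
    weightedNorm volume q (-β) (fun y => ∫ x, K (y - x) * f x) ≤
      ENNReal.ofReal C * weightedNorm volume p α f * powerWeightedNorm n θ s K

namespace YoungInequality

variable {n : ℕ} {p q α β s C : ℝ} {θ : ℝ≥0∞}

local notation "𝔼" => EuclideanSpace ℝ (Fin n)

lemma exists_integral_mul_le (hY : YoungInequality n p q α β s θ C) (hC : 0 ≤ C) (hq : 0 < q)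
    (hθ : θ ≠ 0) :
    ∃ c > 0, ∃ D, ∀ (f : 𝔼 → ℝ) (a b : 𝔼) (m N M : ℝ), (∀ x ∉ closedBall a 1, f x = 0) →
      0 ≤ ∫ x, f x → 0 ≤ m → 0 ≤ N → 0 ≤ M → weightedNorm volume p α f ≤ ENNReal.ofReal N →
      (∀ x ∈ closedBall b 3, ‖x‖ ^ s ≤ M) → (∀ y ∈ closedBall (a + b) 1, m ≤ ‖y‖ ^ (-β)) →
      c * (∫ x, f x) * m ≤ D * N * M := by
  refine ⟨volume.real (closedBall (0 : 𝔼) 1) ^ (1 / q), Real.rpow_pos_of_pos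
    (ENNReal.toReal_pos (measure_closedBall_pos _ _ one_pos).ne' measure_closedBall_lt_top.ne) _,
    C * volume.real (closedBall (0 : 𝔼) 3) ^ (1 / θ.toReal), ?_⟩
  intro f a b m N M hf hI hm hN hM hfN hK hwt
  have hlow := ofReal_le_weightedNorm (μ := volume) (w := -β) hq (mul_nonneg hI hm)
    measurableSet_closedBall measure_closedBall_lt_top.ne
    (f := fun y => ∫ x, (closedBall b 3).indicator 1 (y - x) * f x) (S := closedBall (a + b) 1)
    fun y hy => by
      rw [integral_indicator_closedBall_sub_mul volume hf hy (by norm_num), abs_of_nonneg hI]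
      exact mul_le_mul_of_nonneg_left (hwt y hy) hI
  have hupp := powerWeightedNorm_indicator_le hθ hM measurableSet_closedBall
    measure_closedBall_lt_top.ne hK
  rw [Measure.addHaar_real_closedBall_center] at hlow hupp
  have h := hlow.trans ((hY f _).trans (mul_le_mul' (mul_le_mul' le_rfl hfN) hupp))
  rw [← ENNReal.ofReal_mul hC, ← ENNReal.ofReal_mul (by positivity),
    ENNReal.ofReal_le_ofReal_iff (by positivity)] at h
  convert h using 1 <;> ring

lemma exists_mul_le_of_indicator (hY : YoungInequality n p q α β s θ C) (hC : 0 ≤ C)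
    (hp : 0 < p) (hq : 0 < q) (hθ : θ ≠ 0) :
    ∃ c > 0, ∃ D, ∀ (a b : 𝔼) (m Mf M : ℝ), 0 ≤ m → 0 ≤ Mf → 0 ≤ M →
      (∀ x ∈ closedBall a 1, ‖x‖ ^ α ≤ Mf) → (∀ x ∈ closedBall b 3, ‖x‖ ^ s ≤ M) →
      (∀ y ∈ closedBall (a + b) 1, m ≤ ‖y‖ ^ (-β)) → c * m ≤ D * Mf * M := by
  obtain ⟨c, hc, D, hcD⟩ := hY.exists_integral_mul_le hC hq hθ
  set V := volume.real (closedBall (0 : 𝔼) 1)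
  have hV : 0 < V :=
    ENNReal.toReal_pos (measure_closedBall_pos _ _ one_pos).ne' measure_closedBall_lt_top.ne
  refine ⟨c * V, by positivity, D * V ^ (1 / p), fun a b m Mf M hm hMf hM hf hK hwt => ?_⟩
  have hint : ∫ x, (closedBall a 1).indicator (1 : 𝔼 → ℝ) x = V := by
    rw [integral_indicator_one measurableSet_closedBall, Measure.addHaar_real_closedBall_center]
  have hfN := weightedNorm_indicator_le (μ := volume) hp hMf measurableSet_closedBall
    measure_closedBall_lt_top.ne hf
  rw [Measure.addHaar_real_closedBall_center] at hfN
  have h := hcD _ a b m _ M (fun x hx => indicator_of_notMem hx _) (hint ▸ hV.le) hm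
    (by positivity) hM hfN hK hwt
  rw [hint] at h
  exact h.trans_eq (by ring)

lemma alpha_lt [NeZero n] (hY : YoungInequality n p q α β s θ C) (hC : 0 ≤ C) (hp : 1 < p)
    (hq : 0 < q) (hθ : θ ≠ 0) : α < n * (1 - 1 / p) := by
  by_contra! hα
  rw [← finrank_euclideanSpace_fin (𝕜 := ℝ) (n := n)] at hα
  obtain ⟨c, hc, D, hcD⟩ := hY.exists_integral_mul_le hC hq hθ
  obtain ⟨e, hnorm⟩ := exists_norm_smul_eq_abs (E := 𝔼)
  set I := finrank ℝ 𝔼 * volume.real (ball (0 : 𝔼) 1)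
  have hI : 0 < I := mul_pos (Nat.cast_pos.2 finrank_pos)
    (ENNReal.toReal_pos (measure_ball_pos _ _ one_pos).ne' measure_ball_lt_top.ne)
  suffices ∀ R ≥ (1 : ℝ), c * I * (6 ^ (-β) / 2 ^ |β|) * R ^ (1 : ℝ) ≤
      D * (I / p) ^ (1 / p) * (2 ^ |s| * 6 ^ s) * R ^ (1 / p) by
    have := le_of_forall_mul_rpow_le (by positivity) this
    rw [le_div_iff₀ (by linarith), one_mul] at this
    linarith
  intro R hR
  have hR0 : 0 < R := by linarith
  have hint := integral_indicator_ball_norm_rpow_inv_sub (volume : Measure 𝔼) hR0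
  have h := hcD _ 0 ((6 : ℝ) • e) (6 ^ (-β) / 2 ^ |β|) _ (2 ^ |s| * 6 ^ s)
    (fun x hx => indicator_of_notMem (fun hb => hx (ball_subset_closedBall hb)) _)
    (hint ▸ by positivity) (by positivity) (by positivity) (by positivity)
    (weightedNorm_indicator_ball_norm_rpow_inv_sub_le volume (by linarith) hR0 hα)
    (fun x hx => rpow_norm_le_of_mem_closedBall s (by norm_num) hx
      (by rw [hnorm]; norm_num) (by rw [hnorm]; norm_num))
    (fun y hy => by
      rw [zero_add] at hy
      simpa using rpow_div_le_rpow_norm_of_mem_closedBall (-β) (by norm_num) hy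
        (by rw [hnorm]; norm_num) (by rw [hnorm]; norm_num))
  rw [hint] at h
  calc c * I * (6 ^ (-β) / 2 ^ |β|) * R ^ (1 : ℝ) = c * (I * R) * (6 ^ (-β) / 2 ^ |β|) := by
        rw [Real.rpow_one]; ring
    _ ≤ _ := h
    _ = _ := by ring

lemma beta_lt [NeZero n] (hY : YoungInequality n p q α β s θ C) (hp : 0 < p) (hq : 0 < q)
    (hθ : θ ≠ 0) : β < n / q := by
  by_contra! hβ
  obtain ⟨e, hnorm⟩ := exists_norm_smul_eq_abs (E := 𝔼)
  set f := (closedBall ((6 : ℝ) • e) 1).indicator (1 : 𝔼 → ℝ)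
  set K := (closedBall ((-6 : ℝ) • e) 3).indicator (1 : 𝔼 → ℝ)
  have htop : weightedNorm volume q (-β) (fun y => ∫ x, K (y - x) * f x) = ∞ := by
    refine weightedNorm_eq_top volume hq one_pos (c := volume.real (closedBall (0 : 𝔼) 1))
      (ENNReal.toReal_pos (measure_closedBall_pos _ _ one_pos).ne'
        measure_closedBall_lt_top.ne).ne' (fun y hy => ?_) ?_
    · have hy' : y ∈ closedBall ((6 : ℝ) • e + (-6 : ℝ) • e) 1 := by
        rw [← add_smul]; simpa using ball_subset_closedBall hy
      rw [integral_indicator_closedBall_sub_mul volume (fun x hx => indicator_of_notMem hx _)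
        hy' (by norm_num), integral_indicator_one measurableSet_closedBall,
        Measure.addHaar_real_closedBall_center]
    · rw [finrank_euclideanSpace_fin, neg_mul, neg_le_neg_iff, ← div_le_iff₀ hq]
      exact hβ
  have hfN := weightedNorm_indicator_le (μ := volume) (w := α) hp
    (S := closedBall ((6 : ℝ) • e) 1) (M := 2 ^ |α| * 6 ^ α) (by positivity)
    measurableSet_closedBall measure_closedBall_lt_top.ne
    fun x hx => rpow_norm_le_of_mem_closedBall α (by norm_num) hx
      (by rw [hnorm]; norm_num) (by rw [hnorm]; norm_num)
  have hKN := powerWeightedNorm_indicator_le (s := s) hθ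
    (S := closedBall ((-6 : ℝ) • e) 3) (M := 2 ^ |s| * 6 ^ s) (by positivity)
    measurableSet_closedBall measure_closedBall_lt_top.ne
    fun x hx => rpow_norm_le_of_mem_closedBall s (by norm_num) hx
      (by rw [hnorm]; norm_num) (by rw [hnorm]; norm_num)
  have h := (hY f K).trans (mul_le_mul' (mul_le_mul' le_rfl hfN) hKN)
  rw [htop, top_le_iff] at h
  exact ENNReal.mul_ne_top (ENNReal.mul_ne_top ENNReal.ofReal_ne_top ENNReal.ofReal_ne_top)
    ENNReal.ofReal_ne_top h

lemma beta_add_nonneg [NeZero n] (hY : YoungInequality n p q α β s θ C) (hC : 0 ≤ C)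
    (hp : 0 < p) (hq : 0 < q) (hθ : θ ≠ 0) : 0 ≤ β + s := by
  obtain ⟨c, hc, D, hcD⟩ := hY.exists_mul_le_of_indicator hC hp hq hθ
  obtain ⟨e, hnorm⟩ := exists_norm_smul_eq_abs (E := 𝔼)
  suffices ∀ R ≥ (6 : ℝ), c / 2 ^ |β| * R ^ (-β) ≤ D * (2 ^ |α| * 2 ^ α) * 2 ^ |s| * R ^ s by
    linarith [le_of_forall_mul_rpow_le (by positivity) this]
  intro R hR
  have h := hcD ((2 : ℝ) • e) (R • e) (R ^ (-β) / 2 ^ |β|) (2 ^ |α| * 2 ^ α) (2 ^ |s| * R ^ s)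
    (by positivity) (by positivity) (by positivity)
    (fun x hx => rpow_norm_le_of_mem_closedBall α two_pos hx
      (by rw [hnorm]; norm_num) (by rw [hnorm]; norm_num))
    (fun x hx => rpow_norm_le_of_mem_closedBall s (by linarith) hx
      (by rw [hnorm, abs_of_pos (by linarith)]; linarith)
      (by rw [hnorm, abs_of_pos (by linarith)]; linarith))
    (fun y hy => by
      rw [← add_smul] at hy
      simpa using rpow_div_le_rpow_norm_of_mem_closedBall (-β) (by linarith) hy
        (by rw [hnorm, abs_of_pos (by linarith)]; linarith)
        (by rw [hnorm, abs_of_pos (by linarith)]; linarith))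
  calc c / 2 ^ |β| * R ^ (-β) = c * (R ^ (-β) / 2 ^ |β|) := by ring
    _ ≤ _ := h
    _ = _ := by ring

lemma alpha_add_nonneg [NeZero n] (hY : YoungInequality n p q α β s θ C) (hC : 0 ≤ C)
    (hp : 0 < p) (hq : 0 < q) (hθ : θ ≠ 0) : 0 ≤ α + s := by
  obtain ⟨c, hc, D, hcD⟩ := hY.exists_mul_le_of_indicator hC hp hq hθ
  obtain ⟨e, hnorm⟩ := exists_norm_smul_eq_abs (E := 𝔼)
  suffices ∀ R ≥ (10 : ℝ), c * (2 ^ (-β) / 2 ^ |β|) * R ^ (0 : ℝ) ≤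
      D * 2 ^ |α| * 2 ^ |s| * R ^ (α + s) from
    le_of_forall_mul_rpow_le (by positivity) this
  intro R hR
  have h := hcD (R • e) ((2 - R) • e) (2 ^ (-β) / 2 ^ |β|) (2 ^ |α| * R ^ α) (2 ^ |s| * R ^ s)
    (by positivity) (by positivity) (by positivity)
    (fun x hx => rpow_norm_le_of_mem_closedBall α (by linarith) hx
      (by rw [hnorm, abs_of_pos (by linarith)]; linarith)
      (by rw [hnorm, abs_of_pos (by linarith)]; linarith))
    (fun x hx => rpow_norm_le_of_mem_closedBall s (by linarith) hx
      (by rw [hnorm, abs_of_neg (by linarith)]; linarith)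
      (by rw [hnorm, abs_of_neg (by linarith)]; linarith))
    (fun y hy => by
      rw [← add_smul, add_sub_cancel] at hy
      simpa using rpow_div_le_rpow_norm_of_mem_closedBall (-β) two_pos hy
        (by rw [hnorm]; norm_num) (by rw [hnorm]; norm_num))
  calc c * (2 ^ (-β) / 2 ^ |β|) * R ^ (0 : ℝ) = c * (2 ^ (-β) / 2 ^ |β|) := by
        rw [Real.rpow_zero, mul_one]
    _ ≤ _ := h
    _ = _ := by rw [Real.rpow_add (by linarith)]; ring

end YoungInequality

theorem stmt14 (n : ℕ) (hn : 0 < n) (p q α β s : ℝ) (θ : ℝ≥0∞)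
    (hp : 1 < p) (hq : 1 < q) (hθ : 1 < θ)
    (C : ℝ) (hC : 0 < C)
    (hbound : ∀ f K : EuclideanSpace ℝ (Fin n) → ℝ,
      (∫⁻ y, ENNReal.ofReal (|∫ x, K (y - x) * f x| * ‖y‖ ^ (-β)) ^ q) ^ (1 / q) ≤
        ENNReal.ofReal C * (∫⁻ x, ENNReal.ofReal (|f x| * ‖x‖ ^ α) ^ p) ^ (1 / p) *
          powerWeightedNorm n θ s K) :
    α < n * (1 - 1 / p) ∧ β < n / q ∧ 0 ≤ β + s ∧ 0 ≤ α + s := by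
  have : NeZero n := ⟨hn.ne'⟩
  have hY : YoungInequality n p q α β s θ C := hbound
  have hp₀ : 0 < p := by linarith
  have hq₀ : 0 < q := by linarith
  have hθ₀ : θ ≠ 0 := (zero_lt_one.trans hθ).ne'
  exact ⟨hY.alpha_lt hC.le hp hq₀ hθ₀, hY.beta_lt hp₀ hq₀ hθ₀,
    hY.beta_add_nonneg hC.le hp₀ hq₀ hθ₀, hY.alpha_add_nonneg hC.le hp₀ hq₀ hθ₀⟩
end

section
/- Let 1 < p ≤ q < ∞, α < n/p', β < n/q, and suppose 1/q = 1/p + (α+β)/n − 1 + 1 with weight exponents arranged so that L^p_α(ℝ^n) * L^∞_s(ℝ^n) ⊂ L^q_{−β}(ℝ^n) holds (θ = ∞ case). Then necessarily s > 0. Concretely: with K(x) = |x|^{−s} ∈ L^∞_s and f(x) = χ_{{|x|>2}}(x)|x|^{−α−n/p}(ln|x|)^{−2/p} ∈ L^p_α(ℝ^n), the convolution integral (K*f)(y) = ∫_{{|x|>2}} |y−x|^{−s} |x|^{−α−n/p} (ln|x|)^{−2/p} dx is finite for some y only if s > 0 (given α < n/p'). -/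
/-!
If `s ≤ 0`, then far from the origin `‖y - x‖ ^ (-s) ≥ 1`, and the logarithmic factor costs less
than any power `‖x‖ ^ (-δ)`. Taking `δ` to be half the gap between `-α - n / p` and `-n`, the
integrand dominates `‖x‖ ^ c` with `c > -n` near infinity, and such a power is not integrable
outside a ball (polar coordinates reduce this to `∫_R^∞ r ^ (c + n - 1) dr`).
-/

open MeasureTheory Set Filter

section
variable {E : Type*} [NormedAddCommGroup E] [NormedSpace ℝ E] [FiniteDimensional ℝ E]
  [MeasurableSpace E] [BorelSpace E] [Nontrivial E] (μ : Measure E) [μ.IsAddHaarMeasure]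

theorem integrableOn_norm_rpow_setOf_lt_norm_iff {c R : ℝ} (hR : 0 < R) :
    IntegrableOn (fun x : E ↦ ‖x‖ ^ c) {x | R < ‖x‖} μ ↔ c < -Module.finrank ℝ E := by
  have hd : 1 ≤ Module.finrank ℝ E := Module.finrank_pos
  calc IntegrableOn (fun x : E ↦ ‖x‖ ^ c) {x | R < ‖x‖} μ
      ↔ Integrable (fun x : E ↦ (Ioi R).indicator (· ^ c) ‖x‖) μ :=
        (integrable_indicator_iff (measurableSet_lt measurable_const measurable_norm)).symm
    _ ↔ IntegrableOn (fun y : ℝ ↦ y ^ (Module.finrank ℝ E - 1) • (Ioi R).indicator (· ^ c) y)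
          (Ioi 0) := integrable_fun_norm_addHaar μ
    _ ↔ IntegrableOn (fun y : ℝ ↦ y ^ (c + (Module.finrank ℝ E - 1 : ℝ))) (Ioi R) := by
        simp_rw [← indicator_smul_apply (Ioi R) (· ^ (Module.finrank ℝ E - 1)) (· ^ c),
          integrableOn_indicator_iff measurableSet_Ioi, Ioi_inter_Ioi, max_eq_left hR.le]
        refine integrableOn_congr_fun (fun y (hy : R < y) ↦ ?_) measurableSet_Ioi
        have hy0 : 0 < y := hR.trans hy
        rw [smul_eq_mul, Real.rpow_add hy0, ← Real.rpow_natCast, Nat.cast_sub hd, Nat.cast_one,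
          mul_comm]
    _ ↔ c < -Module.finrank ℝ E := by
        rw [integrableOn_Ioi_rpow_iff hR]
        constructor <;> intro h <;> linarith

variable {μ}

theorem lt_neg_finrank_of_norm_rpow_le_of_integrableOn {f : E → ℝ} {c R : ℝ} (hR : 0 < R)
    (hf : IntegrableOn f {x | R < ‖x‖} μ) (hle : ∀ x : E, R < ‖x‖ → ‖x‖ ^ c ≤ f x) :
    c < -Module.finrank ℝ E := by
  have hmeas : MeasurableSet {x : E | R < ‖x‖} := measurableSet_lt measurable_const measurable_norm
  refine (integrableOn_norm_rpow_setOf_lt_norm_iff μ hR).1 <|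
    hf.mono' (measurable_norm.pow_const c).aestronglyMeasurable ?_
  filter_upwards [ae_restrict_mem hmeas] with x hx
  rw [Real.norm_of_nonneg (by positivity)]
  exact hle x hx

end

theorem eventually_rpow_neg_le_log_rpow_neg (a : ℝ) {δ : ℝ} (hδ : 0 < δ) :
    ∀ᶠ r in atTop, r ^ (-δ) ≤ Real.log r ^ (-a) := by
  filter_upwards [(isLittleO_log_rpow_rpow_atTop a hδ).bound one_pos, eventually_gt_atTop 1]
    with r hr hr1
  have hlog : 0 < Real.log r := Real.log_pos hr1
  rw [one_mul, Real.norm_of_nonneg (by positivity), Real.norm_of_nonneg (by positivity)] at hr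
  rw [Real.rpow_neg (by positivity), Real.rpow_neg hlog.le]
  exact inv_anti₀ (by positivity) hr

theorem stmt15_general (n : ℕ) (hn : 0 < n) (p α s : ℝ)
    (hα : α < n * (1 - 1 / p))
    (y : EuclideanSpace ℝ (Fin n))
    (hfin : IntegrableOn
      (fun x : EuclideanSpace ℝ (Fin n) =>
        ‖y - x‖ ^ (-s) * ‖x‖ ^ (-α - (n : ℝ) / p) * Real.log ‖x‖ ^ (-(2 / p)))
      {x : EuclideanSpace ℝ (Fin n) | 2 < ‖x‖} volume) :
    0 < s := by
  by_contra! hs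
  have : Nontrivial (EuclideanSpace ℝ (Fin n)) :=
    Module.nontrivial_of_finrank_pos (R := ℝ) (by rwa [finrank_euclideanSpace_fin])
  set t := -α - (n : ℝ) / p
  have ht : -(n : ℝ) < t := by linarith [show (n : ℝ) * (1 - 1 / p) = n - n / p by ring]
  set δ := (t + n) / 2 with hδ
  obtain ⟨R, hR⟩ := eventually_atTop.1 <|
    eventually_rpow_neg_le_log_rpow_neg (2 / p) (show 0 < δ by linarith)
  set R₀ := max (max 2 (‖y‖ + 1)) R
  have hdom : ∀ x : EuclideanSpace ℝ (Fin n), R₀ < ‖x‖ →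
      ‖x‖ ^ (t - δ) ≤ ‖y - x‖ ^ (-s) * ‖x‖ ^ t * Real.log ‖x‖ ^ (-(2 / p)) := by
    intro x hx
    simp only [R₀, max_lt_iff] at hx
    obtain ⟨⟨hx2, hxy⟩, hxR⟩ := hx
    have hyx : 1 ≤ ‖y - x‖ := by linarith [norm_sub_norm_le x y, norm_sub_rev x y]
    calc ‖x‖ ^ (t - δ) = 1 * ‖x‖ ^ t * ‖x‖ ^ (-δ) := by
          rw [one_mul, ← Real.rpow_add (by linarith), sub_eq_add_neg]
      _ ≤ ‖y - x‖ ^ (-s) * ‖x‖ ^ t * Real.log ‖x‖ ^ (-(2 / p)) := by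
          gcongr
          · exact Real.one_le_rpow hyx (by linarith)
          · exact hR _ hxR.le
  have hsub : {x : EuclideanSpace ℝ (Fin n) | R₀ < ‖x‖} ⊆ {x | 2 < ‖x‖} :=
    fun x (hx : R₀ < ‖x‖) ↦ (le_max_left _ _ |>.trans (le_max_left _ _)).trans_lt hx
  have hc := lt_neg_finrank_of_norm_rpow_le_of_integrableOn (by positivity) (hfin.mono_set hsub) hdom
  rw [finrank_euclideanSpace_fin] at hc
  linarith

theorem stmt15 (n : ℕ) (hn : 0 < n) (p α s : ℝ) (hp : 1 < p)
    (hα : α < n * (1 - 1 / p))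
    (y : EuclideanSpace ℝ (Fin n))
    (hfin : IntegrableOn
      (fun x : EuclideanSpace ℝ (Fin n) =>
        ‖y - x‖ ^ (-s) * ‖x‖ ^ (-α - (n : ℝ) / p) * Real.log ‖x‖ ^ (-(2 / p)))
      {x : EuclideanSpace ℝ (Fin n) | 2 < ‖x‖} volume) :
    0 < s :=
  stmt15_general n hn p α s hα y hfin
end
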